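/- arXiv:2408.05791 — 8 statements merged into one kernel-verified Lean document; each statement's English description precedes it below -/
import Mathlib

section
/- Fix real numbers σα > 0, σβ > 0 and z₀ > 0. Then, as λ → ∞, the quantity λ⁻² · log ( ∬_{{(a,b) ∈ [0,∞)² : a + b > z₀ λ}} (4ab/(σα² σβ²)) · exp(−a²/σα² − b²/σβ²) da db ) converges to −z₀²/(σα² + σβ²). -/
/-!
The integrand is `rayleighPDF A a * rayleighPDF B b`, proportional to `exp (-Q)` with
`Q = a²/A + b²/B`. On the region `a + b > c`, Cauchy–Schwarz gives `Q ≥ c²/(A+B)`, with equality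
at `(cA/(A+B), cB/(A+B))`. For the upper bound, tilting with `t = 1/c` bounds `exp (-Q)` by
`exp (-(1-t) c²/(A+B)) · exp (-t Q)`, and the tilted density has total mass `1/t²`; for the lower
bound, integrate over a unit box at the minimiser. Hence the log of the tail integral is
`-c²/(A+B) + O(c)`, and the limit follows with `c = z₀ λ`.
-/

open MeasureTheory Filter Topology Set Real Asymptotics

lemma integral_Ioi_mul_exp_neg_mul_sq {b : ℝ} (hb : 0 < b) :
    ∫ x in Ioi (0 : ℝ), x * exp (-b * x ^ 2) = (2 * b)⁻¹ := by
  have h := integral_mul_cexp_neg_mul_sq (b := (b : ℂ)) (by simpa using hb)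
  rw [← Complex.ofReal_inj, ← integral_complex_ofReal]
  push_cast
  exact h

noncomputable def rayleighPDF (s x : ℝ) : ℝ := 2 * x / s * exp (-x ^ 2 / s)

lemma rayleighPDF_eq (s x : ℝ) : rayleighPDF s x = 2 / s * (x * exp (-s⁻¹ * x ^ 2)) := by
  unfold rayleighPDF; ring_nf

lemma rayleighPDF_nonneg {s x : ℝ} (hs : 0 ≤ s) (hx : 0 ≤ x) : 0 ≤ rayleighPDF s x := by
  unfold rayleighPDF; positivity

lemma rayleighPDF_mul_rayleighPDF (A B a b : ℝ) :
    rayleighPDF A a * rayleighPDF B b = 4 * a * b / (A * B) * exp (-a ^ 2 / A - b ^ 2 / B) := by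
  rw [rayleighPDF, rayleighPDF, sub_eq_add_neg, exp_add, ← neg_div]
  ring

lemma integrable_rayleighPDF {s : ℝ} (hs : 0 < s) : Integrable (rayleighPDF s) := by
  simp_rw [funext (rayleighPDF_eq s)]
  exact (integrable_mul_exp_neg_mul_sq (inv_pos.2 hs)).const_mul _

lemma integral_Ici_rayleighPDF {s : ℝ} (hs : 0 < s) : ∫ x in Ici 0, rayleighPDF s x = 1 := by
  rw [integral_Ici_eq_integral_Ioi, funext (rayleighPDF_eq s), integral_const_mul,
    integral_Ioi_mul_exp_neg_mul_sq (inv_pos.2 hs)]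
  field_simp

lemma add_sq_div_add_le {A B : ℝ} (hA : 0 < A) (hB : 0 < B) (a b : ℝ) :
    (a + b) ^ 2 / (A + B) ≤ a ^ 2 / A + b ^ 2 / B := by
  rw [div_add_div _ _ hA.ne' hB.ne', div_le_div_iff₀ (by positivity) (by positivity)]
  nlinarith [sq_nonneg (a * B - b * A), mul_pos hA hB]

lemma tendsto_inv_sq_mul_of_isBigO {f : ℝ → ℝ} {L : ℝ}
    (h : (fun x => f x - L * x ^ 2) =O[atTop] id) :
    Tendsto (fun x => (x ^ 2)⁻¹ * f x) atTop (𝓝 L) := by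
  have h' : (fun x => (x ^ 2)⁻¹ * f x - L) =O[atTop] fun x : ℝ => x⁻¹ := by
    refine ((isBigO_refl (fun x : ℝ => (x ^ 2)⁻¹) atTop).mul h).congr' ?_ ?_
    · filter_upwards [eventually_ne_atTop 0] with x hx
      field_simp
    · filter_upwards [eventually_ne_atTop 0] with x hx
      simp only [id]
      field_simp
  exact tendsto_sub_nhds_zero_iff.1 (h'.trans_tendsto tendsto_inv_atTop_zero)

section Quadrant

variable {A B : ℝ}

def l1Tail (c : ℝ) : Set (ℝ × ℝ) := {p | 0 ≤ p.1 ∧ 0 ≤ p.2 ∧ c < p.1 + p.2}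

lemma l1Tail_subset (c : ℝ) : l1Tail c ⊆ Ici 0 ×ˢ Ici 0 := fun _ hp => ⟨hp.1, hp.2.1⟩

lemma measurableSet_l1Tail (c : ℝ) : MeasurableSet (l1Tail c) :=
  (measurableSet_le measurable_const measurable_fst).inter
    ((measurableSet_le measurable_const measurable_snd).inter
      (measurableSet_lt measurable_const (measurable_fst.add measurable_snd)))

lemma integrableOn_rayleighPDF_mul (hA : 0 < A) (hB : 0 < B) (s : Set (ℝ × ℝ)) :
    IntegrableOn (fun p : ℝ × ℝ => rayleighPDF A p.1 * rayleighPDF B p.2) s :=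
  ((integrable_rayleighPDF hA).mul_prod (integrable_rayleighPDF hB)).integrableOn

lemma integral_quadrant_rayleighPDF_mul (hA : 0 < A) (hB : 0 < B) :
    ∫ p in Ici (0 : ℝ) ×ˢ Ici (0 : ℝ), rayleighPDF A p.1 * rayleighPDF B p.2 = 1 := by
  rw [Measure.volume_eq_prod, setIntegral_prod_mul, integral_Ici_rayleighPDF hA,
    integral_Ici_rayleighPDF hB, one_mul]

lemma rayleighPDF_mul_le_of_mem_l1Tail (hA : 0 < A) (hB : 0 < B) {c t : ℝ} (hc : 0 ≤ c)
    (ht : 0 < t) (ht1 : t ≤ 1) {p : ℝ × ℝ} (hp : p ∈ l1Tail c) :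
    rayleighPDF A p.1 * rayleighPDF B p.2 ≤
      exp (-(1 - t) * (c ^ 2 / (A + B))) / t ^ 2 *
        (rayleighPDF (A / t) p.1 * rayleighPDF (B / t) p.2) := by
  obtain ⟨a, b⟩ := p
  obtain ⟨ha, hb, hab⟩ : 0 ≤ a ∧ 0 ≤ b ∧ c < a + b := hp
  dsimp only
  have hQ : c ^ 2 / (A + B) ≤ a ^ 2 / A + b ^ 2 / B :=
    le_trans (by gcongr) (add_sq_div_add_le hA hB a b)
  have htilt : -a ^ 2 / (A / t) - b ^ 2 / (B / t) = -t * (a ^ 2 / A + b ^ 2 / B) := by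
    field_simp
    ring
  have hexp : -a ^ 2 / A - b ^ 2 / B ≤
      -(1 - t) * (c ^ 2 / (A + B)) + (-a ^ 2 / (A / t) - b ^ 2 / (B / t)) := by
    rw [htilt, neg_div]
    nlinarith [mul_nonneg (sub_nonneg.2 ht1) (sub_nonneg.2 hQ)]
  calc rayleighPDF A a * rayleighPDF B b = 4 * a * b / (A * B) * exp (-a ^ 2 / A - b ^ 2 / B) :=
        rayleighPDF_mul_rayleighPDF A B a b
    _ ≤ 4 * a * b / (A * B) *
        exp (-(1 - t) * (c ^ 2 / (A + B)) + (-a ^ 2 / (A / t) - b ^ 2 / (B / t))) := by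
        gcongr
    _ = _ := by
        rw [rayleighPDF, rayleighPDF, exp_add, sub_eq_add_neg (-a ^ 2 / (A / t)), exp_add]
        field_simp
        ring

lemma integral_l1Tail_le (hA : 0 < A) (hB : 0 < B) {c t : ℝ} (hc : 0 ≤ c) (ht : 0 < t)
    (ht1 : t ≤ 1) :
    ∫ p in l1Tail c, rayleighPDF A p.1 * rayleighPDF B p.2 ≤
      exp (-(1 - t) * (c ^ 2 / (A + B))) / t ^ 2 := by
  have hAt : 0 < A / t := div_pos hA ht
  have hBt : 0 < B / t := div_pos hB ht
  calc ∫ p in l1Tail c, rayleighPDF A p.1 * rayleighPDF B p.2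
      ≤ ∫ p in l1Tail c, exp (-(1 - t) * (c ^ 2 / (A + B))) / t ^ 2 *
          (rayleighPDF (A / t) p.1 * rayleighPDF (B / t) p.2) :=
        setIntegral_mono_on (integrableOn_rayleighPDF_mul hA hB _)
          ((integrableOn_rayleighPDF_mul hAt hBt _).const_mul _) (measurableSet_l1Tail c)
          fun _ hp => rayleighPDF_mul_le_of_mem_l1Tail hA hB hc ht ht1 hp
    _ ≤ ∫ p in Ici (0 : ℝ) ×ˢ Ici (0 : ℝ), exp (-(1 - t) * (c ^ 2 / (A + B))) / t ^ 2 *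
          (rayleighPDF (A / t) p.1 * rayleighPDF (B / t) p.2) := by
        refine setIntegral_mono_set ((integrableOn_rayleighPDF_mul hAt hBt _).const_mul _)
          ?_ (l1Tail_subset c).eventuallyLE
        refine ae_restrict_of_forall_mem (measurableSet_Ici.prod measurableSet_Ici) ?_
        rintro p ⟨hp₁, hp₂⟩
        have := mul_nonneg (rayleighPDF_nonneg hAt.le hp₁) (rayleighPDF_nonneg hBt.le hp₂)
        positivity
    _ = exp (-(1 - t) * (c ^ 2 / (A + B))) / t ^ 2 := by
        rw [integral_const_mul, integral_quadrant_rayleighPDF_mul hAt hBt, mul_one]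

lemma le_integral_l1Tail (hA : 0 < A) (hB : 0 < B) {c : ℝ} (hc : 0 ≤ c) :
    4 * c ^ 2 / (A + B) ^ 2 * exp (-((c ^ 2 + 4 * c) / (A + B) + 1 / A + 1 / B)) ≤
      ∫ p in l1Tail c, rayleighPDF A p.1 * rayleighPDF B p.2 := by
  set a₀ := c * A / (A + B)
  set b₀ := c * B / (A + B)
  set box := Icc a₀ (a₀ + 1) ×ˢ Ioc b₀ (b₀ + 1)
  have ha₀ : 0 ≤ a₀ := by positivity
  have hb₀ : 0 ≤ b₀ := by positivity
  have hsum : a₀ + b₀ = c := by simp only [a₀, b₀]; field_simp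
  have hbox : box ⊆ l1Tail c := by
    rintro ⟨a, b⟩ ⟨⟨ha, -⟩, ⟨hb, -⟩⟩
    exact ⟨ha₀.trans ha, hb₀.trans hb.le, by dsimp only; linarith⟩
  have hvol : volume box = 1 := by
    rw [Measure.volume_eq_prod, Measure.prod_prod, Real.volume_Icc, Real.volume_Ioc]
    norm_num
  have hpoint : ∀ p ∈ box, 4 * c ^ 2 / (A + B) ^ 2 *
      exp (-((c ^ 2 + 4 * c) / (A + B) + 1 / A + 1 / B)) ≤
        rayleighPDF A p.1 * rayleighPDF B p.2 := by
    rintro ⟨a, b⟩ ⟨⟨ha, ha'⟩, ⟨hb, hb'⟩⟩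
    dsimp only at ha ha' hb hb' ⊢
    have ha0 : 0 ≤ a := ha₀.trans ha
    have hb0 : 0 ≤ b := hb₀.trans hb.le
    rw [rayleighPDF_mul_rayleighPDF]
    have hcoef : 4 * c ^ 2 / (A + B) ^ 2 ≤ 4 * a * b / (A * B) := by
      have : 4 * c ^ 2 / (A + B) ^ 2 = 4 * a₀ * b₀ / (A * B) := by
        simp only [a₀, b₀]; field_simp
      rw [this]
      gcongr
    have hexp : -((c ^ 2 + 4 * c) / (A + B) + 1 / A + 1 / B) ≤ -a ^ 2 / A - b ^ 2 / B := by
      have : (c ^ 2 + 4 * c) / (A + B) + 1 / A + 1 / B =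
          (a₀ + 1) ^ 2 / A + (b₀ + 1) ^ 2 / B := by
        simp only [a₀, b₀]; field_simp; ring
      have h₁ : a ^ 2 / A ≤ (a₀ + 1) ^ 2 / A := by gcongr
      have h₂ : b ^ 2 / B ≤ (b₀ + 1) ^ 2 / B := by gcongr
      rw [this, neg_div]
      linarith
    gcongr
  calc 4 * c ^ 2 / (A + B) ^ 2 * exp (-((c ^ 2 + 4 * c) / (A + B) + 1 / A + 1 / B))
      = ∫ _ in box, 4 * c ^ 2 / (A + B) ^ 2 *
          exp (-((c ^ 2 + 4 * c) / (A + B) + 1 / A + 1 / B)) := by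
        rw [setIntegral_const, measureReal_def, hvol, ENNReal.toReal_one, one_smul]
    _ ≤ ∫ p in box, rayleighPDF A p.1 * rayleighPDF B p.2 :=
        setIntegral_mono_on (integrableOn_const (by simp [hvol]))
          (integrableOn_rayleighPDF_mul hA hB _) (measurableSet_Icc.prod measurableSet_Ioc) hpoint
    _ ≤ ∫ p in l1Tail c, rayleighPDF A p.1 * rayleighPDF B p.2 := by
        refine setIntegral_mono_set (integrableOn_rayleighPDF_mul hA hB _) ?_ hbox.eventuallyLE
        exact ae_restrict_of_forall_mem (measurableSet_l1Tail c) fun p hp =>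
          mul_nonneg (rayleighPDF_nonneg hA.le hp.1) (rayleighPDF_nonneg hB.le hp.2.1)

lemma log_integral_l1Tail_le (hA : 0 < A) (hB : 0 < B) {c : ℝ} (hc : 1 ≤ c) :
    log (∫ p in l1Tail c, rayleighPDF A p.1 * rayleighPDF B p.2) ≤
      -((c ^ 2 - c) / (A + B)) + 2 * log c := by
  have hc0 : 0 < c := one_pos.trans_le hc
  have hI : 0 < ∫ p in l1Tail c, rayleighPDF A p.1 * rayleighPDF B p.2 :=
    lt_of_lt_of_le (by positivity) (le_integral_l1Tail hA hB hc0.le)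
  calc log (∫ p in l1Tail c, rayleighPDF A p.1 * rayleighPDF B p.2)
      ≤ log (exp (-(1 - c⁻¹) * (c ^ 2 / (A + B))) / c⁻¹ ^ 2) :=
        log_le_log hI
          (integral_l1Tail_le hA hB hc0.le (inv_pos.2 hc0) (inv_le_one_of_one_le₀ hc))
    _ = -((c ^ 2 - c) / (A + B)) + 2 * log c := by
        rw [log_div (exp_pos _).ne' (by positivity), log_exp, log_pow, log_inv]
        field_simp
        ring

lemma le_log_integral_l1Tail (hA : 0 < A) (hB : 0 < B) {c : ℝ} (hc : 1 ≤ c) :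
    log (4 / (A + B) ^ 2) - ((c ^ 2 + 4 * c) / (A + B) + 1 / A + 1 / B) ≤
      log (∫ p in l1Tail c, rayleighPDF A p.1 * rayleighPDF B p.2) := by
  have hc0 : 0 < c := one_pos.trans_le hc
  calc log (4 / (A + B) ^ 2) - ((c ^ 2 + 4 * c) / (A + B) + 1 / A + 1 / B)
      ≤ log (4 * c ^ 2 / (A + B) ^ 2 *
          exp (-((c ^ 2 + 4 * c) / (A + B) + 1 / A + 1 / B))) := by
        rw [log_mul (by positivity) (exp_pos _).ne', log_exp, ← sub_eq_add_neg]
        gcongr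
        nlinarith
    _ ≤ log (∫ p in l1Tail c, rayleighPDF A p.1 * rayleighPDF B p.2) :=
        log_le_log (by positivity) (le_integral_l1Tail hA hB hc0.le)

lemma isBigO_log_integral_l1Tail (hA : 0 < A) (hB : 0 < B) :
    (fun c => log (∫ p in l1Tail c, rayleighPDF A p.1 * rayleighPDF B p.2) + c ^ 2 / (A + B))
      =O[atTop] id := by
  set d := log (4 / (A + B) ^ 2) - 1 / A - 1 / B with hd_def
  refine IsBigO.of_bound (1 / (A + B) + 2 + 4 / (A + B) + |d|) ?_
  filter_upwards [eventually_ge_atTop 1] with c hc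
  have hup := log_integral_l1Tail_le hA hB hc
  have hlow := le_log_integral_l1Tail hA hB hc
  have hlog : log c ≤ c := log_le_self (by linarith)
  have hd : -|d| * c ≤ d := by nlinarith [neg_abs_le d, abs_nonneg d]
  rw [norm_eq_abs, norm_eq_abs, id, abs_of_pos (by linarith : (0 : ℝ) < c), abs_le]
  have : 0 ≤ 1 / (A + B) * c := by positivity
  have : 0 ≤ 4 / (A + B) * c := by positivity
  have : 0 ≤ |d| * c := by positivity
  have : -((c ^ 2 - c) / (A + B)) = -(c ^ 2 / (A + B)) + 1 / (A + B) * c := by ring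
  have : log (4 / (A + B) ^ 2) - ((c ^ 2 + 4 * c) / (A + B) + 1 / A + 1 / B) =
      -(c ^ 2 / (A + B)) - 4 / (A + B) * c + d := by rw [hd_def]; ring
  have : (1 / (A + B) + 2 + 4 / (A + B) + |d|) * c =
      1 / (A + B) * c + 2 * c + 4 / (A + B) * c + |d| * c := by ring
  have : -|d| * c = -(|d| * c) := by ring
  constructor <;> linarith

end Quadrant

/-- Large deviations principle for the ℓ¹ norm of the moduli of two independent
mean-zero complex Gaussians with variances `σα²` and `σβ²`. -/
theorem ell1_LDP (σα σβ z₀ : ℝ) (hσα : 0 < σα) (hσβ : 0 < σβ) (hz₀ : 0 < z₀) :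
    Tendsto (fun lam : ℝ =>
      (lam ^ 2)⁻¹ * Real.log (∫ p in {p : ℝ × ℝ | 0 ≤ p.1 ∧ 0 ≤ p.2 ∧ z₀ * lam < p.1 + p.2},
        4 * p.1 * p.2 / (σα ^ 2 * σβ ^ 2) *
          Real.exp (-(p.1 ^ 2) / σα ^ 2 - p.2 ^ 2 / σβ ^ 2)))
      atTop (𝓝 (-(z₀ ^ 2) / (σα ^ 2 + σβ ^ 2))) := by
  have hA : 0 < σα ^ 2 := by positivity
  have hB : 0 < σβ ^ 2 := by positivity
  simp_rw [← rayleighPDF_mul_rayleighPDF]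
  refine tendsto_inv_sq_mul_of_isBigO ?_
  have h := ((isBigO_log_integral_l1Tail hA hB).comp_tendsto
    (tendsto_id.const_mul_atTop hz₀)).trans (isBigO_const_mul_self z₀ id atTop)
  refine h.congr_left fun lam => ?_
  simp only [Function.comp_apply, id, l1Tail]
  ring
end

section
/- Fix real numbers σα > 0, σβ > 0 and z₀ > 0. Then, as λ → ∞, the quantity λ⁻² · log ( ∬_{{(a,b) ∈ [0,∞)² : √2 · √(a² + b²) > z₀ λ}} (4ab/(σα² σβ²)) · exp(−a²/σα² − b²/σβ²) da db ) converges to −z₀²/(2 · max(σα², σβ²)). -/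
/-! The tail `P(√(|α|² + |β|²) > r)` is bounded below by `exp (-r² / M)`, `M = max (σα², σβ²)`,
the probability that the modulus of larger variance alone exceeds `r`. It is bounded above by
Chernoff's bound `s⁻² exp (-(1 - s) r² / M)`, `0 < s ≤ 1`, obtained by tilting both Rayleigh
densities by `exp (s a² / σ²)`. With `s = 1 / r` both bounds give `log P / r² → -1 / M`, and the
theorem is the case `r = z₀ λ / √2`. -/

open MeasureTheory Filter Topology Real Set

/-- The density of `|α|` for a mean-zero complex Gaussian `α` with `E|α|² = v`. -/
noncomputable def rayleighDensity (v x : ℝ) : ℝ := 2 * x / v * exp (-x ^ 2 / v)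

def quadrantTail (r : ℝ) : Set (ℝ × ℝ) :=
  {p | 0 ≤ p.1 ∧ 0 ≤ p.2 ∧ r < √(p.1 ^ 2 + p.2 ^ 2)}

section

variable {v v₁ v₂ : ℝ}

lemma rayleighDensity_nonneg (hv : 0 ≤ v) {x : ℝ} (hx : 0 ≤ x) : 0 ≤ rayleighDensity v x := by
  unfold rayleighDensity; positivity

lemma hasDerivAt_neg_exp_neg_sq_div (v x : ℝ) :
    HasDerivAt (fun x => -exp (-x ^ 2 / v)) (rayleighDensity v x) x := by
  have hinner : HasDerivAt (fun x => -x ^ 2 / v) (-(2 * x) / v) x := by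
    simpa using ((hasDerivAt_pow 2 x).neg).div_const v
  exact hinner.exp.neg.congr_deriv (by rw [rayleighDensity]; ring)

lemma integrable_rayleighDensity (hv : 0 < v) : Integrable (rayleighDensity v) := by
  refine ((integrable_mul_exp_neg_mul_sq (inv_pos.2 hv)).const_mul (2 / v)).congr
    (ae_of_all _ fun x => ?_)
  simp only [rayleighDensity]
  ring_nf

lemma integral_Ioi_rayleighDensity (hv : 0 < v) (c : ℝ) :
    ∫ x in Ioi c, rayleighDensity v x = exp (-c ^ 2 / v) := by
  have hdecay : Tendsto (fun x : ℝ => -exp (-x ^ 2 / v)) atTop (𝓝 0) := by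
    have := (tendsto_exp_neg_atTop_nhds_zero.comp
      ((tendsto_pow_atTop two_ne_zero).atTop_div_const hv)).neg
    simpa [Function.comp_def, neg_div] using this
  rw [integral_Ioi_of_hasDerivAt_of_tendsto' (fun x _ => hasDerivAt_neg_exp_neg_sq_div v x)
    (integrable_rayleighDensity hv).integrableOn hdecay]
  ring

lemma integral_Ici_zero_rayleighDensity (hv : 0 < v) :
    ∫ x in Ici 0, rayleighDensity v x = 1 := by
  rw [integral_Ici_eq_integral_Ioi, integral_Ioi_rayleighDensity hv]
  simp

lemma rayleighDensity_eq_mul_exp {s : ℝ} (hs : s ≠ 0) (v x : ℝ) :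
    rayleighDensity v x = s⁻¹ * rayleighDensity (v / s) x * exp (-(1 - s) * (x ^ 2 / v)) := by
  have hexp : exp (-x ^ 2 / v) = exp (-x ^ 2 / (v / s)) * exp (-(1 - s) * (x ^ 2 / v)) := by
    rw [← exp_add]
    congr 1
    field_simp
    ring
  simp only [rayleighDensity, hexp]
  field_simp

lemma measurableSet_quadrantTail (r : ℝ) : MeasurableSet (quadrantTail r) := by
  unfold quadrantTail; measurability

lemma quadrantTail_subset (r : ℝ) : quadrantTail r ⊆ Ici 0 ×ˢ Ici 0 :=
  fun _ hp => ⟨hp.1, hp.2.1⟩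

lemma integrable_rayleighDensity_mul (hv₁ : 0 < v₁) (hv₂ : 0 < v₂) :
    Integrable (fun p : ℝ × ℝ => rayleighDensity v₁ p.1 * rayleighDensity v₂ p.2) := by
  rw [Measure.volume_eq_prod]
  exact (integrable_rayleighDensity hv₁).mul_prod (integrable_rayleighDensity hv₂)

lemma setIntegral_rayleighDensity_mul_mono (hv₁ : 0 < v₁) (hv₂ : 0 < v₂) {A B : Set (ℝ × ℝ)}
    (hB : MeasurableSet B) (hBq : B ⊆ Ici 0 ×ˢ Ici 0) (hAB : A ⊆ B) :
    ∫ p in A, rayleighDensity v₁ p.1 * rayleighDensity v₂ p.2 ≤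
      ∫ p in B, rayleighDensity v₁ p.1 * rayleighDensity v₂ p.2 := by
  refine setIntegral_mono_set (integrable_rayleighDensity_mul hv₁ hv₂).integrableOn
    (ae_restrict_of_forall_mem hB fun p hp => ?_) hAB.eventuallyLE
  obtain ⟨hx, hy⟩ := hBq hp
  exact mul_nonneg (rayleighDensity_nonneg hv₁.le hx) (rayleighDensity_nonneg hv₂.le hy)

lemma integral_quadrant_rayleighDensity_mul (hv₁ : 0 < v₁) (hv₂ : 0 < v₂) :
    ∫ p in Ici 0 ×ˢ Ici 0, rayleighDensity v₁ p.1 * rayleighDensity v₂ p.2 = 1 := by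
  rw [Measure.volume_eq_prod, setIntegral_prod_mul, integral_Ici_zero_rayleighDensity hv₁,
    integral_Ici_zero_rayleighDensity hv₂, one_mul]

lemma exp_neg_sq_div_max_le_integral_quadrantTail (hv₁ : 0 < v₁) (hv₂ : 0 < v₂) {r : ℝ}
    (hr : 0 ≤ r) :
    exp (-r ^ 2 / max v₁ v₂) ≤
      ∫ p in quadrantTail r, rayleighDensity v₁ p.1 * rayleighDensity v₂ p.2 := by
  have hmono := fun A (hA : A ⊆ quadrantTail r) => setIntegral_rayleighDensity_mul_mono hv₁ hv₂
    (measurableSet_quadrantTail r) (quadrantTail_subset r) hA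
  rcases max_choice v₁ v₂ with hmax | hmax <;> rw [hmax]
  · have hsub : Ioi r ×ˢ Ici 0 ⊆ quadrantTail r := by
      rintro ⟨x, y⟩ ⟨hx, hy⟩
      exact ⟨hr.trans hx.le, hy,
        hx.trans_le (le_sqrt_of_sq_le (le_add_of_nonneg_right (sq_nonneg y)))⟩
    refine le_of_eq_of_le ?_ (hmono _ hsub)
    rw [Measure.volume_eq_prod, setIntegral_prod_mul, integral_Ioi_rayleighDensity hv₁,
      integral_Ici_zero_rayleighDensity hv₂, mul_one]
  · have hsub : Ici 0 ×ˢ Ioi r ⊆ quadrantTail r := by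
      rintro ⟨x, y⟩ ⟨hx, hy⟩
      exact ⟨hx, hr.trans hy.le,
        hy.trans_le (le_sqrt_of_sq_le (le_add_of_nonneg_left (sq_nonneg x)))⟩
    refine le_of_eq_of_le ?_ (hmono _ hsub)
    rw [Measure.volume_eq_prod, setIntegral_prod_mul, integral_Ioi_rayleighDensity hv₂,
      integral_Ici_zero_rayleighDensity hv₁, one_mul]

lemma integral_quadrantTail_le (hv₁ : 0 < v₁) (hv₂ : 0 < v₂) {r s : ℝ} (hr : 0 ≤ r)
    (hs₀ : 0 < s) (hs₁ : s ≤ 1) :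
    ∫ p in quadrantTail r, rayleighDensity v₁ p.1 * rayleighDensity v₂ p.2 ≤
      (s ^ 2)⁻¹ * exp (-(1 - s) * (r ^ 2 / max v₁ v₂)) := by
  set K := (s ^ 2)⁻¹ * exp (-(1 - s) * (r ^ 2 / max v₁ v₂))
  have hv₁s : 0 < v₁ / s := div_pos hv₁ hs₀
  have hv₂s : 0 < v₂ / s := div_pos hv₂ hs₀
  have hpoint : ∀ p ∈ quadrantTail r, rayleighDensity v₁ p.1 * rayleighDensity v₂ p.2 ≤
      K * (rayleighDensity (v₁ / s) p.1 * rayleighDensity (v₂ / s) p.2) := by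
    rintro ⟨x, y⟩ ⟨hx, hy, hxy⟩
    have hquad : r ^ 2 / max v₁ v₂ ≤ x ^ 2 / v₁ + y ^ 2 / v₂ := calc
      r ^ 2 / max v₁ v₂ ≤ (x ^ 2 + y ^ 2) / max v₁ v₂ := by
        gcongr; exact ((lt_sqrt hr).1 hxy).le
      _ = x ^ 2 / max v₁ v₂ + y ^ 2 / max v₁ v₂ := add_div _ _ _
      _ ≤ x ^ 2 / v₁ + y ^ 2 / v₂ := by gcongr <;> simp
    have hρ := mul_nonneg (rayleighDensity_nonneg hv₁s.le hx) (rayleighDensity_nonneg hv₂s.le hy)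
    calc rayleighDensity v₁ x * rayleighDensity v₂ y
        = (s ^ 2)⁻¹ * exp (-(1 - s) * (x ^ 2 / v₁ + y ^ 2 / v₂)) *
            (rayleighDensity (v₁ / s) x * rayleighDensity (v₂ / s) y) := by
          rw [rayleighDensity_eq_mul_exp hs₀.ne' v₁ x, rayleighDensity_eq_mul_exp hs₀.ne' v₂ y,
            mul_add, exp_add]
          ring
      _ ≤ K * (rayleighDensity (v₁ / s) x * rayleighDensity (v₂ / s) y) := by
          refine mul_le_mul_of_nonneg_right (mul_le_mul_of_nonneg_left (exp_le_exp.2 ?_)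
            (by positivity)) hρ
          nlinarith
  calc ∫ p in quadrantTail r, rayleighDensity v₁ p.1 * rayleighDensity v₂ p.2
      ≤ ∫ p in quadrantTail r, K * (rayleighDensity (v₁ / s) p.1 * rayleighDensity (v₂ / s) p.2) :=
        setIntegral_mono_on (integrable_rayleighDensity_mul hv₁ hv₂).integrableOn
          ((integrable_rayleighDensity_mul hv₁s hv₂s).const_mul K).integrableOn
          (measurableSet_quadrantTail r) hpoint
    _ = K * ∫ p in quadrantTail r, rayleighDensity (v₁ / s) p.1 * rayleighDensity (v₂ / s) p.2 :=
        integral_const_mul K _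
    _ ≤ K * ∫ p in Ici 0 ×ˢ Ici 0, rayleighDensity (v₁ / s) p.1 * rayleighDensity (v₂ / s) p.2 := by
        refine mul_le_mul_of_nonneg_left ?_ (by positivity)
        exact setIntegral_rayleighDensity_mul_mono hv₁s hv₂s
          (measurableSet_Ici.prod measurableSet_Ici) subset_rfl (quadrantTail_subset r)
    _ = K := by rw [integral_quadrant_rayleighDensity_mul hv₁s hv₂s, mul_one]

lemma neg_sq_div_max_le_log_integral_quadrantTail (hv₁ : 0 < v₁) (hv₂ : 0 < v₂) {r : ℝ}
    (hr : 0 ≤ r) :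
    -r ^ 2 / max v₁ v₂ ≤
      log (∫ p in quadrantTail r, rayleighDensity v₁ p.1 * rayleighDensity v₂ p.2) := by
  have hlow := exp_neg_sq_div_max_le_integral_quadrantTail hv₁ hv₂ hr
  exact (le_log_iff_exp_le ((exp_pos _).trans_le hlow)).2 hlow

lemma log_integral_quadrantTail_le (hv₁ : 0 < v₁) (hv₂ : 0 < v₂) {r : ℝ} (hr : 1 ≤ r) :
    log (∫ p in quadrantTail r, rayleighDensity v₁ p.1 * rayleighDensity v₂ p.2) ≤
      2 * r - (r - 1) * r / max v₁ v₂ := by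
  have hr₀ : 0 < r := one_pos.trans_le hr
  have hupp := integral_quadrantTail_le hv₁ hv₂ hr₀.le (inv_pos.2 hr₀) (inv_le_one_of_one_le₀ hr)
  have hpos := (exp_pos _).trans_le (exp_neg_sq_div_max_le_integral_quadrantTail hv₁ hv₂ hr₀.le)
  rw [inv_pow, inv_inv] at hupp
  calc _ ≤ log (r ^ 2 * exp (-(1 - r⁻¹) * (r ^ 2 / max v₁ v₂))) := log_le_log hpos hupp
    _ = 2 * log r - (r - 1) * r / max v₁ v₂ := by
        rw [log_mul (by positivity) (exp_ne_zero _), log_exp, log_pow]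
        field_simp
        ring
    _ ≤ 2 * r - (r - 1) * r / max v₁ v₂ := by linarith [log_le_self hr₀.le]

theorem tendsto_log_integral_quadrantTail_div_sq (hv₁ : 0 < v₁) (hv₂ : 0 < v₂) :
    Tendsto (fun r => log (∫ p in quadrantTail r, rayleighDensity v₁ p.1 * rayleighDensity v₂ p.2)
      / r ^ 2) atTop (𝓝 (-1 / max v₁ v₂)) := by
  have hupper : Tendsto (fun r : ℝ => -1 / max v₁ v₂ + (2 + 1 / max v₁ v₂) * r⁻¹) atTop
      (𝓝 (-1 / max v₁ v₂)) := by
    simpa using (tendsto_inv_atTop_zero.const_mul (2 + 1 / max v₁ v₂)).const_add (-1 / max v₁ v₂)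
  refine tendsto_of_tendsto_of_tendsto_of_le_of_le' tendsto_const_nhds hupper ?_ ?_ <;>
    filter_upwards [eventually_ge_atTop 1] with r hr
  · rw [le_div_iff₀ (pow_pos (one_pos.trans_le hr) 2)]
    exact (by ring : -1 / max v₁ v₂ * r ^ 2 = _).trans_le
      (neg_sq_div_max_le_log_integral_quadrantTail hv₁ hv₂ (zero_le_one.trans hr))
  · rw [div_le_iff₀ (pow_pos (one_pos.trans_le hr) 2)]
    refine (log_integral_quadrantTail_le hv₁ hv₂ hr).trans_eq ?_
    field_simp
    ring

end

lemma setOf_lt_sqrt_two_mul_eq_quadrantTail (t : ℝ) :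
    {p : ℝ × ℝ | 0 ≤ p.1 ∧ 0 ≤ p.2 ∧ t < √2 * √(p.1 ^ 2 + p.2 ^ 2)} = quadrantTail (t / √2) := by
  ext p
  simp only [quadrantTail, mem_ofPred_eq, div_lt_iff₀' (sqrt_pos.2 two_pos)]

lemma mul_exp_eq_rayleighDensity_mul (v₁ v₂ : ℝ) :
    (fun p : ℝ × ℝ => 4 * p.1 * p.2 / (v₁ * v₂) * exp (-(p.1 ^ 2) / v₁ - p.2 ^ 2 / v₂)) =
      fun p => rayleighDensity v₁ p.1 * rayleighDensity v₂ p.2 := by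
  ext p
  simp only [rayleighDensity, sub_eq_add_neg, exp_add, neg_div]
  ring

/-- Large deviations principle for `√2` times the ℓ² norm of the moduli of two independent
mean-zero complex Gaussians with variances `σα²` and `σβ²`. -/
theorem ell2_LDP (σα σβ z₀ : ℝ) (hσα : 0 < σα) (hσβ : 0 < σβ) (hz₀ : 0 < z₀) :
    Tendsto (fun lam : ℝ =>
      (lam ^ 2)⁻¹ * Real.log (∫ p in {p : ℝ × ℝ |
            0 ≤ p.1 ∧ 0 ≤ p.2 ∧ z₀ * lam < Real.sqrt 2 * Real.sqrt (p.1 ^ 2 + p.2 ^ 2)},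
        4 * p.1 * p.2 / (σα ^ 2 * σβ ^ 2) *
          Real.exp (-(p.1 ^ 2) / σα ^ 2 - p.2 ^ 2 / σβ ^ 2)))
      atTop (𝓝 (-(z₀ ^ 2) / (2 * max (σα ^ 2) (σβ ^ 2)))) := by
  have hradius : Tendsto (fun lam : ℝ => z₀ * lam / √2) atTop atTop :=
    (tendsto_id.const_mul_atTop hz₀).atTop_div_const (sqrt_pos.2 two_pos)
  have hlim := ((tendsto_log_integral_quadrantTail_div_sq (pow_pos hσα 2)
    (pow_pos hσβ 2)).comp hradius).const_mul (z₀ ^ 2 / 2)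
  rw [show z₀ ^ 2 / 2 * (-1 / max (σα ^ 2) (σβ ^ 2)) = -(z₀ ^ 2) / (2 * max (σα ^ 2) (σβ ^ 2))
    by ring] at hlim
  refine hlim.congr' ?_
  filter_upwards [eventually_gt_atTop 0] with lam hlam
  rw [Function.comp_apply, setOf_lt_sqrt_two_mul_eq_quadrantTail, mul_exp_eq_rayleighDensity_mul,
    div_pow, mul_pow, sq_sqrt zero_le_two]
  field_simp
end

section
/- Define h : ℝ → ℝ by h(ξ) = |cos ξ| + |sin ξ|. Fix λ > 0. Then there exists ρ > 0 such that: for every τ ∈ [0, ρ) the equation y · h(2τy²) = λ has a unique nonnegative solution y(τ); the map τ ↦ y(τ) is Lipschitz on [0, ρ) and differentiable on (0, ρ); y(0) = λ; and y(τ) → λ as τ → 0⁺. -/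
/-- The function `h(ξ) = |cos ξ| + |sin ξ|`. -/
noncomputable def h (ξ : ℝ) : ℝ := |Real.cos ξ| + |Real.sin ξ|

/-!
Write `G τ z = z · h(2τz²)`. Since `1 ≤ h` and `h` is 2-Lipschitz, every nonnegative solution
of `G τ z = λ` lies in `[0, λ]`, and for `τ < 1/(16λ²)` the map `G τ` grows with slope at least
`1/2` on `[0, λ]`. The intermediate value theorem then gives exactly one solution `y τ`, and
comparing `G τ₁` with `G τ₂` at a common point turns the slope bound into a Lipschitz bound for
`y`. For such `τ` the argument `ξ = 2τy²` stays below `1/2`, where `h = cos + sin` is smooth and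
`∂G/∂z = cos ξ (1 + 2ξ) + sin ξ (1 - 2ξ) > 0`, so the implicit function theorem makes `y`
differentiable.
-/

open Real Set Filter Topology

section Implicit

variable {𝕜 : Type*} [NontriviallyNormedField 𝕜]
  {E₁ : Type*} [NormedAddCommGroup E₁] [NormedSpace 𝕜 E₁] [CompleteSpace E₁]
  {E₂ : Type*} [NormedAddCommGroup E₂] [NormedSpace 𝕜 E₂] [CompleteSpace E₂]
  {F : Type*} [NormedAddCommGroup F] [NormedSpace 𝕜 F] [CompleteSpace F]

theorem HasStrictFDerivAt.differentiableAt_of_eventually_apply_eq {f : E₁ × E₂ → F}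
    {f' : E₁ × E₂ →L[𝕜] F} {y : E₁ → E₂} {x : E₁} (hf : HasStrictFDerivAt f f' (x, y x))
    (hf₂ : (f' ∘L .inr 𝕜 E₁ E₂).IsInvertible) (hy : ContinuousAt y x)
    (hfy : ∀ᶠ s in 𝓝 x, f (s, y s) = f (x, y x)) : DifferentiableAt 𝕜 y x := by
  have hgraph : Tendsto (fun s => (s, y s)) (𝓝 x) (𝓝 (x, y x)) :=
    continuousAt_id.prodMk hy
  have hψ : y =ᶠ[𝓝 x] hf.implicitFunctionOfProdDomain hf₂ := by
    filter_upwards [hgraph.eventually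
      (hf.eventually_apply_eq_iff_implicitFunctionOfProdDomain hf₂), hfy] with s hs hfs
    exact (hs.1 hfs).symm
  exact (hf.hasStrictFDerivAt_implicitFunctionOfProdDomain hf₂).differentiableAt
    |>.congr_of_eventuallyEq hψ

end Implicit

theorem ContinuousLinearMap.isInvertible_of_apply_one_ne_zero {𝕜 : Type*}
    [NontriviallyNormedField 𝕜] {g : 𝕜 →L[𝕜] 𝕜} (hg : g 1 ≠ 0) : g.IsInvertible :=
  ⟨ContinuousLinearEquiv.unitsEquivAut 𝕜 (Units.mk0 _ hg), by ext; simp⟩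

lemma one_le_h (ξ : ℝ) : 1 ≤ h ξ := by
  rw [h]
  nlinarith [sin_sq_add_cos_sq ξ, sq_abs (cos ξ), sq_abs (sin ξ), abs_nonneg (cos ξ),
    abs_nonneg (sin ξ), abs_cos_le_one ξ, abs_sin_le_one ξ]

lemma abs_h_sub_h_le (a b : ℝ) : |h a - h b| ≤ 2 * |a - b| :=
  calc |h a - h b| = |(|cos a| - |cos b|) + (|sin a| - |sin b|)| := by rw [h, h]; ring_nf
    _ ≤ |cos a - cos b| + |sin a - sin b| :=
      (abs_add_le _ _).trans
        (add_le_add (abs_abs_sub_abs_le_abs_sub _ _) (abs_abs_sub_abs_le_abs_sub _ _))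
    _ ≤ 2 * |a - b| := by linarith [abs_cos_sub_cos_le a b, abs_sin_sub_sin_le a b]

lemma h_eq_cos_add_sin {ξ : ℝ} (h₀ : 0 ≤ ξ) (h₁ : ξ ≤ π / 2) : h ξ = cos ξ + sin ξ := by
  rw [h, abs_of_nonneg (cos_nonneg_of_mem_Icc ⟨by linarith [pi_pos], h₁⟩),
    abs_of_nonneg (sin_nonneg_of_nonneg_of_le_pi h₀ (by linarith [pi_pos]))]

noncomputable def G (τ z : ℝ) : ℝ := z * h (2 * τ * z ^ 2)

lemma G_zero_left (z : ℝ) : G 0 z = z := by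
  simp [G, h]

lemma le_G {τ z : ℝ} (hz : 0 ≤ z) : z ≤ G τ z :=
  le_mul_of_one_le_right hz (one_le_h _)

lemma exists_G_eq {c : ℝ} (hc : 0 ≤ c) (τ : ℝ) : ∃ z ∈ Icc 0 c, G τ z = c := by
  have hcont : Continuous (G τ) := by
    unfold G h
    fun_prop
  have hc' : c ∈ Icc (G τ 0) (G τ c) := ⟨by simp [G, hc], le_G hc⟩
  exact intermediate_value_Icc hc hcont.continuousOn hc'

lemma abs_G_sub_G_le (τ₁ τ₂ : ℝ) {z : ℝ} (hz : 0 ≤ z) :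
    |G τ₁ z - G τ₂ z| ≤ 4 * z ^ 3 * |τ₁ - τ₂| :=
  calc |G τ₁ z - G τ₂ z| = z * |h (2 * τ₁ * z ^ 2) - h (2 * τ₂ * z ^ 2)| := by
        rw [G, G, ← mul_sub, abs_mul, abs_of_nonneg hz]
    _ ≤ z * (2 * |2 * τ₁ * z ^ 2 - 2 * τ₂ * z ^ 2|) :=
        mul_le_mul_of_nonneg_left (abs_h_sub_h_le _ _) hz
    _ = 4 * z ^ 3 * |τ₁ - τ₂| := by
        rw [show 2 * τ₁ * z ^ 2 - 2 * τ₂ * z ^ 2 = (2 * z ^ 2) * (τ₁ - τ₂) by ring, abs_mul,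
          abs_of_nonneg (by positivity)]
        ring

lemma sub_le_two_mul_G_sub {τ M z₁ z₂ : ℝ} (hτ : 0 ≤ τ) (hτM : τ * (16 * M ^ 2) ≤ 1)
    (hz₁ : 0 ≤ z₁) (h₁₂ : z₁ ≤ z₂) (hz₂ : z₂ ≤ M) : z₂ - z₁ ≤ 2 * (G τ z₂ - G τ z₁) := by
  have hd : 0 ≤ z₂ - z₁ := sub_nonneg.2 h₁₂
  have hh : h (2 * τ * z₁ ^ 2) - h (2 * τ * z₂ ^ 2) ≤ 4 * τ * (z₂ - z₁) * (z₂ + z₁) :=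
    calc h (2 * τ * z₁ ^ 2) - h (2 * τ * z₂ ^ 2)
        ≤ 2 * |2 * τ * z₁ ^ 2 - 2 * τ * z₂ ^ 2| := (le_abs_self _).trans (abs_h_sub_h_le _ _)
      _ = 4 * τ * (z₂ - z₁) * (z₂ + z₁) := by
        rw [show 2 * τ * z₁ ^ 2 - 2 * τ * z₂ ^ 2 = -(2 * τ * (z₂ - z₁) * (z₂ + z₁)) by ring,
          abs_neg, abs_of_nonneg (mul_nonneg (mul_nonneg (by positivity) hd) (by linarith))]
        ring
  have hprod : z₁ * (z₂ + z₁) ≤ 2 * M ^ 2 := by nlinarith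
  have hslope : 1 ≤ h (2 * τ * z₂ ^ 2) := one_le_h _
  rw [G, G]
  nlinarith [mul_le_mul_of_nonneg_left hh hz₁, mul_le_mul_of_nonneg_left hprod
    (mul_nonneg hτ hd), mul_le_mul_of_nonneg_left hslope hd]

lemma strictMonoOn_G {τ M : ℝ} (hτ : 0 ≤ τ) (hτM : τ * (16 * M ^ 2) ≤ 1) :
    StrictMonoOn (G τ) (Icc 0 M) := fun _ ha _ hb hab => by
  linarith [sub_le_two_mul_G_sub hτ hτM ha.1 hab.le hb.2]

lemma abs_sub_le_of_G_eq {τ₁ τ₂ M c z₁ z₂ : ℝ} (hτ₁ : 0 ≤ τ₁) (hτ₂ : 0 ≤ τ₂)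
    (hτ₁M : τ₁ * (16 * M ^ 2) ≤ 1) (hτ₂M : τ₂ * (16 * M ^ 2) ≤ 1)
    (hz₁ : z₁ ∈ Icc 0 M) (hz₂ : z₂ ∈ Icc 0 M) (h₁ : G τ₁ z₁ = c) (h₂ : G τ₂ z₂ = c) :
    |z₁ - z₂| ≤ 8 * M ^ 3 * |τ₁ - τ₂| := by
  wlog h₁₂ : z₁ ≤ z₂ generalizing τ₁ τ₂ z₁ z₂
  · rw [abs_sub_comm z₁, abs_sub_comm τ₁]
    exact this hτ₂ hτ₁ hτ₂M hτ₁M hz₂ hz₁ h₂ h₁ (le_of_not_ge h₁₂)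
  rw [abs_sub_comm, abs_of_nonneg (sub_nonneg.2 h₁₂)]
  calc z₂ - z₁ ≤ 2 * (G τ₂ z₂ - G τ₂ z₁) := sub_le_two_mul_G_sub hτ₂ hτ₂M hz₁.1 h₁₂ hz₂.2
    _ = 2 * (G τ₁ z₁ - G τ₂ z₁) := by rw [h₁, h₂]
    _ ≤ 2 * (4 * z₁ ^ 3 * |τ₁ - τ₂|) := by
        gcongr
        exact (le_abs_self _).trans (abs_G_sub_G_le _ _ hz₁.1)
    _ ≤ 8 * M ^ 3 * |τ₁ - τ₂| := by
        nlinarith [pow_le_pow_left₀ hz₁.1 hz₁.2 3, abs_nonneg (τ₁ - τ₂)]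

lemma lipschitzOnWith_of_G_eq {y : ℝ → ℝ} {s : Set ℝ} {M c : ℝ}
    (hs : ∀ τ ∈ s, 0 ≤ τ ∧ τ * (16 * M ^ 2) ≤ 1)
    (hy : ∀ τ ∈ s, y τ ∈ Icc 0 M ∧ G τ (y τ) = c) :
    LipschitzOnWith (Real.toNNReal (8 * M ^ 3)) y s :=
  LipschitzOnWith.of_dist_le_mul fun a ha b hb => by
    rw [Real.dist_eq, Real.dist_eq]
    exact (abs_sub_le_of_G_eq (hs a ha).1 (hs b hb).1 (hs a ha).2 (hs b hb).2 (hy a ha).1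
      (hy b hb).1 (hy a ha).2 (hy b hb).2).trans
      (mul_le_mul_of_nonneg_right (Real.le_coe_toNNReal _) (abs_nonneg _))

noncomputable def Gtrig (p : ℝ × ℝ) : ℝ :=
  p.2 * (cos (2 * p.1 * p.2 ^ 2) + sin (2 * p.1 * p.2 ^ 2))

lemma G_eq_Gtrig {τ z : ℝ} (hτ : 0 ≤ τ) (hξ : 2 * τ * z ^ 2 ≤ π / 2) :
    G τ z = Gtrig (τ, z) := by
  rw [G, h_eq_cos_add_sin (by positivity) hξ, Gtrig]

lemma contDiff_Gtrig : ContDiff ℝ 1 Gtrig := by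
  unfold Gtrig
  fun_prop

lemma hasDerivAt_Gtrig_snd (τ z : ℝ) :
    HasDerivAt (fun w => Gtrig (τ, w))
      (cos (2 * τ * z ^ 2) * (1 + 4 * τ * z ^ 2) + sin (2 * τ * z ^ 2) * (1 - 4 * τ * z ^ 2))
      z := by
  have hξ : HasDerivAt (fun w => 2 * τ * w ^ 2) (4 * τ * z) z :=
    ((hasDerivAt_pow 2 z).const_mul (2 * τ)).congr_deriv (by push_cast; ring)
  exact ((hasDerivAt_id' z).mul (hξ.cos.fun_add hξ.sin)).congr_deriv (by ring)

lemma isInvertible_fderiv_Gtrig_comp_inr {τ z : ℝ} (hτ : 0 ≤ τ) (hξ : 4 * τ * z ^ 2 < 1) :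
    (fderiv ℝ Gtrig (τ, z) ∘L .inr ℝ ℝ ℝ).IsInvertible := by
  apply ContinuousLinearMap.isInvertible_of_apply_one_ne_zero
  have hpartial := (contDiff_Gtrig.differentiable one_ne_zero (τ, z)).hasFDerivAt
    |>.comp_hasDerivAt z ((hasDerivAt_const z τ).prodMk (hasDerivAt_id z))
  rw [ContinuousLinearMap.comp_apply, ContinuousLinearMap.inr_apply,
    hpartial.unique (hasDerivAt_Gtrig_snd τ z)]
  have hξ₀ : 0 ≤ 4 * τ * z ^ 2 := by positivity
  have hcos : 0 < cos (2 * τ * z ^ 2) :=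
    cos_pos_of_mem_Ioo ⟨by linarith [pi_pos], by linarith [pi_gt_three]⟩
  have hsin : 0 ≤ sin (2 * τ * z ^ 2) :=
    sin_nonneg_of_nonneg_of_le_pi (by positivity) (by linarith [pi_gt_three])
  have : 0 ≤ sin (2 * τ * z ^ 2) * (1 - 4 * τ * z ^ 2) := mul_nonneg hsin (by linarith)
  have : 0 < cos (2 * τ * z ^ 2) * (1 + 4 * τ * z ^ 2) := by positivity
  linarith

lemma differentiableAt_of_eventually_G_eq {y : ℝ → ℝ} {t c : ℝ} (hy : ContinuousAt y t)
    (hG : ∀ᶠ s in 𝓝 t, 0 ≤ s ∧ 4 * s * y s ^ 2 < 1 ∧ G s (y s) = c) :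
    DifferentiableAt ℝ y t := by
  have hGtrig : ∀ᶠ s in 𝓝 t, Gtrig (s, y s) = c := by
    filter_upwards [hG] with s ⟨hs, hξ, hGs⟩
    rw [← G_eq_Gtrig hs (by linarith [pi_gt_three]), hGs]
  obtain ⟨ht, hξ, -⟩ := hG.self_of_nhds
  refine (contDiff_Gtrig.contDiffAt.hasStrictFDerivAt one_ne_zero)
    |>.differentiableAt_of_eventually_apply_eq (isInvertible_fderiv_Gtrig_comp_inr ht hξ) hy ?_
  filter_upwards [hGtrig] with s hs
  rw [hs, hGtrig.self_of_nhds]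

/-- For small times the implicit equation `y · h(2τy²) = λ` has a unique nonnegative
solution `y(τ)`, which is Lipschitz on `[0, ρ)`, differentiable on `(0, ρ)`, equals `λ`
at `τ = 0` and tends to `λ` as `τ → 0⁺`. -/
theorem implicit_solution_small_time (lam : ℝ) (hlam : 0 < lam) :
    ∃ ρ > 0, ∃ y : ℝ → ℝ,
      (∀ τ ∈ Set.Ico (0 : ℝ) ρ,
        (0 ≤ y τ ∧ y τ * h (2 * τ * (y τ) ^ 2) = lam) ∧
        ∀ y' : ℝ, 0 ≤ y' → y' * h (2 * τ * y' ^ 2) = lam → y' = y τ) ∧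
      (∃ K : NNReal, LipschitzOnWith K y (Set.Ico (0 : ℝ) ρ)) ∧
      DifferentiableOn ℝ y (Set.Ioo (0 : ℝ) ρ) ∧
      y 0 = lam ∧
      Filter.Tendsto y (nhdsWithin 0 (Set.Ioi (0 : ℝ))) (nhds lam) := by
  set ρ := 1 / (16 * lam ^ 2)
  have hρ : 0 < ρ := by positivity
  have hsmall : ∀ τ ∈ Ico 0 ρ, τ * (16 * lam ^ 2) < 1 := fun τ hτ =>
    (lt_div_iff₀ (by positivity)).1 hτ.2
  choose y hy using exists_G_eq hlam.le
  have huniq : ∀ τ ∈ Ico 0 ρ, ∀ z, 0 ≤ z → G τ z = lam → z = y τ := fun τ hτ z hz hzG =>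
    (strictMonoOn_G hτ.1 (hsmall τ hτ).le).injOn ⟨hz, hzG ▸ le_G hz⟩ (hy τ).1
      (hzG.trans (hy τ).2.symm)
  have hlip := lipschitzOnWith_of_G_eq (fun τ hτ => ⟨hτ.1, (hsmall τ hτ).le⟩) fun τ _ => hy τ
  have hy0 : y 0 = lam := (huniq 0 ⟨le_rfl, hρ⟩ lam hlam.le (G_zero_left lam)).symm
  refine ⟨ρ, hρ, y, fun τ hτ => ⟨⟨(hy τ).1.1, (hy τ).2⟩, huniq τ hτ⟩, ⟨_, hlip⟩, ?_, hy0, ?_⟩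
  · intro t ht
    refine (differentiableAt_of_eventually_G_eq (c := lam)
      (hlip.continuousOn.continuousAt (Ico_mem_nhds ht.1 ht.2)) ?_).differentiableWithinAt
    filter_upwards [Ioo_mem_nhds ht.1 ht.2] with s hs
    have hsτ := hsmall s (Ioo_subset_Ico_self hs)
    obtain ⟨⟨hys₀, hys⟩, hGs⟩ := hy s
    refine ⟨hs.1.le, ?_, hGs⟩
    nlinarith [mul_le_mul_of_nonneg_left (pow_le_pow_left₀ hys₀ hys 2) hs.1.le]
  · have hcont := hlip.continuousOn 0 ⟨le_rfl, hρ⟩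
    rw [ContinuousWithinAt, hy0] at hcont
    exact hcont.mono_left (nhdsWithin_le_of_mem (Ico_mem_nhdsGT hρ))
end

section
/- Define h : ℝ → ℝ by h(ξ) = |cos ξ| + |sin ξ|. There exists j₀ ∈ ℕ such that for every integer j ≥ j₀: (1) there exists ξ in the open interval (π(2j−1)/4, πj/2) at which h is differentiable and h(ξ) + 2ξ·h'(ξ) = 0; and (2) every ξ ∈ (π(2j−1)/4, πj/2) satisfying h(ξ) + 2ξ·h'(ξ) = 0 obeys 1/(√2·π·j) ≤ ξ − π(2j−1)/4 ≤ √2/(π(j − 1/2)). -/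
open Real

lemma h_periodic : Function.Periodic h (π / 2) := by
  intro x
  simp [h, Real.cos_add_pi_div_two, Real.sin_add_pi_div_two, abs_neg, add_comm]

lemma h_key (m : ℕ) {ξ : ℝ} (h1 : 0 < ξ - m * (π / 2)) (h2 : ξ - m * (π / 2) < π / 2) :
    h ξ = Real.cos (ξ - m * (π / 2)) + Real.sin (ξ - m * (π / 2)) ∧
      HasDerivAt h (Real.cos (ξ - m * (π / 2)) - Real.sin (ξ - m * (π / 2))) ξ := by
  set c : ℝ := m * (π / 2) with hc
  have hev : h =ᶠ[nhds ξ] fun x => Real.cos (x - c) + Real.sin (x - c) := by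
    have hopen : IsOpen {x : ℝ | 0 < x - c ∧ x - c < π / 2} := by
      have : {x : ℝ | 0 < x - c ∧ x - c < π / 2} = (fun x => x - c) ⁻¹' Set.Ioo 0 (π / 2) := rfl
      rw [this]
      exact isOpen_Ioo.preimage (by continuity)
    filter_upwards [hopen.mem_nhds ⟨h1, h2⟩] with x hx
    have hper : h (x - c) = h x := h_periodic.sub_nat_mul_eq m
    rw [← hper, h]
    have hcpos : 0 < Real.cos (x - c) :=
      Real.cos_pos_of_mem_Ioo ⟨by linarith [Real.pi_pos], hx.2⟩
    have hspos : 0 < Real.sin (x - c) :=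
      Real.sin_pos_of_pos_of_lt_pi hx.1 (by linarith [Real.pi_pos])
    rw [abs_of_pos hcpos, abs_of_pos hspos]
  have hid : HasDerivAt (fun x : ℝ => x - c) 1 ξ := (hasDerivAt_id ξ).sub_const c
  have hd : HasDerivAt (fun x => Real.cos (x - c) + Real.sin (x - c))
      (-Real.sin (ξ - c) * 1 + Real.cos (ξ - c) * 1) ξ := hid.cos.add hid.sin
  have hd' : HasDerivAt (fun x => Real.cos (x - c) + Real.sin (x - c))
      (Real.cos (ξ - c) - Real.sin (ξ - c)) ξ := by
    convert hd using 1; ring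
  exact ⟨hev.self_of_nhds, hd'.congr_of_eventuallyEq hev⟩

set_option maxHeartbeats 1000000 in
/-- For all large `j`, the equation `h(ξ) + 2ξ h'(ξ) = 0` has a solution in the interval
`(π(2j−1)/4, πj/2)`, and every such solution `ξ` satisfies
`1/(√2 π j) ≤ ξ − π(2j−1)/4 ≤ √2/(π(j − 1/2))`. -/
theorem collision_points_localization :
    ∃ j₀ : ℕ, ∀ j : ℕ, j₀ ≤ j →
      (∃ ξ ∈ Set.Ioo (π * (2 * (j : ℝ) - 1) / 4) (π * (j : ℝ) / 2),
        DifferentiableAt ℝ h ξ ∧ h ξ + 2 * ξ * deriv h ξ = 0) ∧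
      ∀ ξ ∈ Set.Ioo (π * (2 * (j : ℝ) - 1) / 4) (π * (j : ℝ) / 2),
        h ξ + 2 * ξ * deriv h ξ = 0 →
          1 / (Real.sqrt 2 * π * j) ≤ ξ - π * (2 * (j : ℝ) - 1) / 4 ∧
          ξ - π * (2 * (j : ℝ) - 1) / 4 ≤ Real.sqrt 2 / (π * ((j : ℝ) - 1 / 2)) := by
  refine ⟨1, fun j hj => ?_⟩
  have hj1 : (1 : ℝ) ≤ (j : ℝ) := by exact_mod_cast hj
  have hpi : 0 < π := Real.pi_pos
  set m : ℕ := j - 1 with hmdef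
  have hm : (m : ℝ) = (j : ℝ) - 1 := by
    rw [hmdef, Nat.cast_sub hj, Nat.cast_one]
  set c : ℝ := m * (π / 2) with hcdef
  set a : ℝ := π * (2 * (j : ℝ) - 1) / 4 with hadef
  set b : ℝ := π * (j : ℝ) / 2 with hbdef
  have hac : a = c + π / 4 := by rw [hadef, hcdef, hm]; ring
  have hbc : b = c + π / 2 := by rw [hbdef, hcdef, hm]; ring
  have hs2 : Real.sqrt 2 * Real.sqrt 2 = 2 := Real.mul_self_sqrt (by norm_num)
  have hs2pos : 0 < Real.sqrt 2 := Real.sqrt_pos.mpr (by norm_num)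
  have hs2ge1 : (1 : ℝ) ≤ Real.sqrt 2 := by nlinarith [Real.sqrt_nonneg 2]
  -- the key facts on the interval
  have key : ∀ ξ ∈ Set.Ioo a b,
      h ξ = Real.cos (ξ - c) + Real.sin (ξ - c) ∧
        HasDerivAt h (Real.cos (ξ - c) - Real.sin (ξ - c)) ξ := by
    intro ξ hξ
    exact h_key m (by rw [← hcdef]; have := hξ.1; rw [hac] at this; linarith)
      (by rw [← hcdef]; have := hξ.2; rw [hbc] at this; linarith)
  constructor
  · -- existence via intermediate value theorem
    set G : ℝ → ℝ := fun x =>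
      Real.cos (x - c) + Real.sin (x - c) + 2 * x * (Real.cos (x - c) - Real.sin (x - c))
      with hGdef
    have hab : a ≤ b := by rw [hac, hbc]; linarith
    have hcont : ContinuousOn G (Set.Icc a b) := by
      apply Continuous.continuousOn
      fun_prop
    have hGa : G a = Real.sqrt 2 := by
      have : a - c = π / 4 := by rw [hac]; ring
      simp only [hGdef, this, Real.cos_pi_div_four, Real.sin_pi_div_four]
      ring
    have hGb : G b = 1 - π * j := by
      have : b - c = π / 2 := by rw [hbc]; ring
      simp only [hGdef, this, Real.cos_pi_div_two, Real.sin_pi_div_two]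
      rw [hbdef]; ring
    have h0 : (0 : ℝ) ∈ Set.Ioo (G b) (G a) := by
      constructor
      · rw [hGb]; nlinarith [Real.pi_gt_three]
      · rw [hGa]; exact hs2pos
    obtain ⟨ξ, hξmem, hξeq⟩ := intermediate_value_Ioo' hab hcont h0
    refine ⟨ξ, hξmem, ((key ξ hξmem).2).differentiableAt, ?_⟩
    rw [(key ξ hξmem).1, ((key ξ hξmem).2).deriv]
    exact hξeq
  · -- localization bounds
    intro ξ hξ heq
    obtain ⟨hka, hkb⟩ := key ξ hξ
    rw [hka, hkb.deriv] at heq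
    set u : ℝ := ξ - a with hudef
    have hu1 : 0 < u := by rw [hudef]; have := hξ.1; linarith
    have hu2 : u < π / 4 := by rw [hudef, hadef, hbdef] at *; have := hξ.2; linarith
    have htu : ξ - c = u + π / 4 := by rw [hudef, hac]; ring
    have hcosu : Real.cos (ξ - c) = (Real.cos u - Real.sin u) * (Real.sqrt 2 / 2) := by
      rw [htu, Real.cos_add, Real.cos_pi_div_four, Real.sin_pi_div_four]; ring
    have hsinu : Real.sin (ξ - c) = (Real.sin u + Real.cos u) * (Real.sqrt 2 / 2) := by
      rw [htu, Real.sin_add, Real.cos_pi_div_four, Real.sin_pi_div_four]; ring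
    rw [hcosu, hsinu] at heq
    -- heq : √2 * cos u − 2ξ √2 sin u = 0, hence cos u = 2 ξ sin u
    have hmain : Real.cos u = 2 * ξ * Real.sin u := by
      have h0 : Real.sqrt 2 * (Real.cos u - 2 * ξ * Real.sin u) = 0 := by linarith [heq]
      rcases mul_eq_zero.1 h0 with h' | h'
      · exact absurd h' (ne_of_gt hs2pos)
      · linarith
    have hsin_pos : 0 < Real.sin u := Real.sin_pos_of_pos_of_lt_pi hu1 (by linarith)
    have hcos_ge : Real.sqrt 2 / 2 ≤ Real.cos u := by
      have := Real.cos_le_cos_of_nonneg_of_le_pi hu1.le (by linarith) hu2.le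
      rwa [Real.cos_pi_div_four] at this
    have hsin_le : Real.sin u ≤ u := Real.sin_le hu1.le
    have hapos : 0 < a := by rw [hadef]; nlinarith
    have hξpos : 0 < ξ := lt_trans hapos hξ.1
    constructor
    · -- lower bound
      have hpos : 0 < Real.sqrt 2 * π * j := by positivity
      rw [div_le_iff₀ hpos]
      have h2xb : 2 * ξ < π * j := by
        have := hξ.2; rw [hbdef] at this; linarith
      -- √2/2 ≤ cos u = 2ξ sin u < π j sin u ≤ π j u
      have t1 : Real.sqrt 2 / 2 ≤ 2 * ξ * Real.sin u := by rw [← hmain]; exact hcos_ge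
      have t2 : 2 * ξ * Real.sin u ≤ π * j * Real.sin u :=
        mul_le_mul_of_nonneg_right h2xb.le hsin_pos.le
      have t3 : π * j * Real.sin u ≤ π * j * u :=
        mul_le_mul_of_nonneg_left hsin_le (by positivity)
      have t4 : Real.sqrt 2 / 2 ≤ π * j * u := le_trans t1 (le_trans t2 t3)
      have t5 : Real.sqrt 2 * (Real.sqrt 2 / 2) ≤ Real.sqrt 2 * (π * j * u) :=
        mul_le_mul_of_nonneg_left t4 hs2pos.le
      nlinarith [t5, hs2]
    · -- upper bound
      have hjhalf : 0 < (j : ℝ) - 1 / 2 := by linarith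
      have hpos : 0 < π * ((j : ℝ) - 1 / 2) := by positivity
      rw [le_div_iff₀ hpos]
      have htan : u < Real.tan u := Real.lt_tan hu1 (by linarith)
      have hcos_pos : 0 < Real.cos u := lt_of_lt_of_le (by positivity) hcos_ge
      have hucos : u * Real.cos u < Real.sin u := by
        rw [Real.tan_eq_sin_div_cos] at htan
        exact (lt_div_iff₀ hcos_pos).1 htan
      have h3 : u * (2 * ξ) < 1 := by
        rw [hmain] at hucos
        -- hucos : u * (2 * ξ * sin u) < sin u
        by_contra hcon
        push_neg at hcon
        have : 1 * Real.sin u ≤ u * (2 * ξ) * Real.sin u :=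
          mul_le_mul_of_nonneg_right hcon hsin_pos.le
        nlinarith [this]
      have h2xi : π * ((j : ℝ) - 1 / 2) < 2 * ξ := by
        have h' := hξ.1; rw [hadef] at h'
        have : π * ((j : ℝ) - 1 / 2) = 2 * (π * (2 * (j : ℝ) - 1) / 4) := by ring
        linarith
      have t6 : u * (π * ((j : ℝ) - 1 / 2)) ≤ u * (2 * ξ) :=
        mul_le_mul_of_nonneg_left h2xi.le hu1.le
      exact le_trans (le_of_lt (lt_of_le_of_lt t6 h3)) hs2ge1
end

section
/- Define h : ℝ → ℝ by h(ξ) = |cos ξ| + |sin ξ|, and for λ > 0 and j ∈ ℕ set τ_j = π(j − 1/2)/(2λ²). There exist C > 0 and j₀ ∈ ℕ such that for every λ > 0, every integer j ≥ j₀, and every ξ ∈ (π(2j−1)/4, πj/2) with h(ξ) + 2ξ·h'(ξ) = 0, the quantity τ_j^∞ := ξ · h(ξ)² / (2λ²) satisfies |τ_j^∞ − τ_j| ≤ C/(j·λ²). -/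
open Real

lemma h_eq (j : ℕ) (x : ℝ)
    (hx : x ∈ Set.Ioo (π * (2 * (j : ℝ) - 1) / 4) (π * (j : ℝ) / 2)) :
    h x = Real.sqrt 2 * Real.cos (x - π * (2 * (j : ℝ) - 1) / 4) := by
  set a : ℝ := π * (2 * (j : ℝ) - 1) / 4 with ha
  set θ : ℝ := x - a with hθ
  have hπ : (0:ℝ) < π := Real.pi_pos
  have hθ0 : 0 < θ := by simp [hθ]; linarith [hx.1]
  have hθ1 : θ < π / 4 := by
    have := hx.2
    simp only [hθ, ha]
    linarith
  have hxrw : x = (π / 4 + θ) + ((j : ℤ) - 1) * (π / 2) := by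
    push_cast
    simp only [hθ, ha]
    ring
  have hper : h x = h (π / 4 + θ) := by
    have hp := (h_periodic.int_mul ((j : ℤ) - 1)) (π / 4 + θ)
    rw [← hp, hxrw]
    norm_num
  have hcos : 0 < Real.cos (π / 4 + θ) := by
    apply Real.cos_pos_of_mem_Ioo
    constructor <;> [linarith; linarith]
  have hsin : 0 < Real.sin (π / 4 + θ) := by
    apply Real.sin_pos_of_pos_of_lt_pi <;> linarith
  rw [hper]
  unfold h
  rw [abs_of_pos hcos, abs_of_pos hsin, Real.cos_add, Real.sin_add,
    Real.cos_pi_div_four, Real.sin_pi_div_four]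
  ring

lemma deriv_h_eq (j : ℕ) (x : ℝ)
    (hx : x ∈ Set.Ioo (π * (2 * (j : ℝ) - 1) / 4) (π * (j : ℝ) / 2)) :
    deriv h x = -(Real.sqrt 2 * Real.sin (x - π * (2 * (j : ℝ) - 1) / 4)) := by
  set a : ℝ := π * (2 * (j : ℝ) - 1) / 4
  have hev : h =ᶠ[nhds x] (fun y => Real.sqrt 2 * Real.cos (y - a)) := by
    filter_upwards [isOpen_Ioo.mem_nhds hx] with y hy
    exact h_eq j y hy
  rw [hev.deriv_eq]
  have hd : HasDerivAt (fun y => Real.sqrt 2 * Real.cos (y - a))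
      (Real.sqrt 2 * (-Real.sin (x - a) * 1)) x :=
    (((hasDerivAt_id x).sub_const a).cos).const_mul _
  rw [hd.deriv]
  ring

set_option maxHeartbeats 1000000 in
/-- Asymptotics of the collision times: if `ξ ∈ (π(2j−1)/4, πj/2)` solves
`h(ξ) + 2ξ h'(ξ) = 0`, then `τ_j^∞ = ξ h(ξ)²/(2λ²)` satisfies
`|τ_j^∞ − τ_j| ≤ C/(j λ²)` with `τ_j = π(j − 1/2)/(2λ²)`. -/
theorem collision_time_asymptotics :
    ∃ C > 0, ∃ j₀ : ℕ, ∀ lam : ℝ, 0 < lam → ∀ j : ℕ, j₀ ≤ j →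
      ∀ ξ ∈ Set.Ioo (π * (2 * (j : ℝ) - 1) / 4) (π * (j : ℝ) / 2),
        h ξ + 2 * ξ * deriv h ξ = 0 →
          |ξ * h ξ ^ 2 / (2 * lam ^ 2) - π * ((j : ℝ) - 1 / 2) / (2 * lam ^ 2)|
            ≤ C / (j * lam ^ 2) := by
  refine ⟨2, by norm_num, 2, ?_⟩
  intro lam hlam j hj ξ hξ heq
  have hπ : (0:ℝ) < π := Real.pi_pos
  have hπ3 : (3:ℝ) < π := by linarith [Real.pi_gt_three]
  have hj2 : (2:ℝ) ≤ (j:ℝ) := by exact_mod_cast hj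
  set a : ℝ := π * (2 * (j : ℝ) - 1) / 4 with ha
  set θ : ℝ := ξ - a with hθdef
  have hθ0 : 0 < θ := by simp [hθdef]; linarith [hξ.1]
  have hθ1 : θ < π / 4 := by
    have := hξ.2; simp only [hθdef, ha]; linarith
  have ha_pos : 0 < a := by
    have : (3:ℝ) ≤ 2 * (j:ℝ) - 1 := by linarith
    have := mul_pos hπ (by linarith : (0:ℝ) < 2 * (j:ℝ) - 1)
    simp only [ha]; linarith
  have hξ0 : 0 < ξ := by linarith [hξ.1, ha_pos]
  have hcos : 0 < Real.cos θ := by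
    apply Real.cos_pos_of_mem_Ioo; constructor <;> [linarith; linarith]
  have hsin : 0 < Real.sin θ := Real.sin_pos_of_pos_of_lt_pi hθ0 (by linarith)
  have hh : h ξ = Real.sqrt 2 * Real.cos θ := h_eq j ξ hξ
  have hdh : deriv h ξ = -(Real.sqrt 2 * Real.sin θ) := deriv_h_eq j ξ hξ
  have hs2 : (0:ℝ) < Real.sqrt 2 := Real.sqrt_pos.mpr (by norm_num)
  -- equation: cos θ = 2 ξ sin θ
  have key : Real.cos θ = 2 * ξ * Real.sin θ := by
    rw [hh, hdh] at heq
    have : Real.sqrt 2 * (Real.cos θ - 2 * ξ * Real.sin θ) = 0 := by ring_nf; ring_nf at heq; linarith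
    rcases mul_eq_zero.mp this with h' | h'
    · exact absurd h' (ne_of_gt hs2)
    · linarith
  have hsin_le : Real.sin θ ≤ 1 / (2 * ξ) := by
    rw [le_div_iff₀ (by linarith)]
    have := Real.cos_le_one θ
    linarith [key]
  have hθ_le : θ ≤ 1 / (2 * ξ) := by
    have ht : θ < Real.tan θ := Real.lt_tan hθ0 (by linarith)
    rw [Real.tan_eq_sin_div_cos] at ht
    have : Real.sin θ / Real.cos θ = 1 / (2 * ξ) := by
      rw [key]; field_simp
    linarith [this ▸ ht]
  clear_value θ a
  -- bound on Δ = ξ h² − 2a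
  have hsq : h ξ ^ 2 = 2 * Real.cos θ ^ 2 := by
    rw [hh, mul_pow, Real.sq_sqrt (by norm_num : (0:ℝ) ≤ 2)]
  have haj : (j:ℝ) < a := by rw [ha]; nlinarith
  have hΔ : |ξ * h ξ ^ 2 - π * ((j:ℝ) - 1 / 2)| ≤ (4:ℝ) / (j:ℝ) := by
    have h2a : π * ((j:ℝ) - 1 / 2) = 2 * a := by rw [ha]; ring
    rw [hsq, h2a]
    have hpyth : Real.sin θ ^ 2 + Real.cos θ ^ 2 = 1 := Real.sin_sq_add_cos_sq θ
    have hξa : ξ = a + θ := by rw [hθdef]; ring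
    have hid : ξ * (2 * Real.cos θ ^ 2) - 2 * a
        = 2 * θ * Real.cos θ ^ 2 - 2 * a * Real.sin θ ^ 2 := by
      rw [hξa]; nlinarith [hpyth]
    rw [hid]
    rw [abs_le]
    have hjξ : (j:ℝ) < ξ := by linarith
    have hjpos : (0:ℝ) < j := by linarith
    have hθξ : 2 * θ * ξ ≤ 1 := by
      have := (le_div_iff₀ (by linarith : (0:ℝ) < 2 * ξ)).mp hθ_le
      linarith
    have hsξ : 2 * Real.sin θ * ξ ≤ 1 := by
      have := (le_div_iff₀ (by linarith : (0:ℝ) < 2 * ξ)).mp hsin_le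
      linarith
    have hcos1 : Real.cos θ ≤ 1 := Real.cos_le_one θ
    have hsin1 : Real.sin θ ≤ 1 := Real.sin_le_one θ
    constructor
    · -- lower bound: -(4/j) ≤ 2θcos² - 2a sin²
      have h1 : 2 * a * Real.sin θ ^ 2 ≤ 2 * ξ * Real.sin θ * Real.sin θ := by
        nlinarith [mul_nonneg (by linarith : (0:ℝ) ≤ ξ - a) (sq_nonneg (Real.sin θ))]
      have h2 : 2 * ξ * Real.sin θ * Real.sin θ ≤ Real.sin θ := by nlinarith [hsξ, hsin.le]
      have h3 : Real.sin θ ≤ (4:ℝ) / (j:ℝ) := by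
        rw [le_div_iff₀ hjpos]; nlinarith
      have h0 : 0 ≤ 2 * θ * Real.cos θ ^ 2 := by positivity
      linarith
    · -- upper bound
      have h1 : 2 * θ * Real.cos θ ^ 2 ≤ 2 * θ := by nlinarith [sq_nonneg (Real.sin θ)]
      have h2 : 2 * θ ≤ (4:ℝ) / (j:ℝ) := by
        rw [le_div_iff₀ hjpos]; nlinarith
      have h0 : 0 ≤ 2 * a * Real.sin θ ^ 2 := by positivity
      linarith
  have hjpos : (0:ℝ) < j := by linarith
  have h2l : (0:ℝ) < 2 * lam ^ 2 := by positivity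
  have hrw : ξ * h ξ ^ 2 / (2 * lam ^ 2) - π * ((j : ℝ) - 1 / 2) / (2 * lam ^ 2)
      = (ξ * h ξ ^ 2 - π * ((j : ℝ) - 1 / 2)) / (2 * lam ^ 2) := by ring
  rw [hrw, abs_div, abs_of_pos h2l, div_le_div_iff₀ h2l (by positivity)]
  have habs : (0:ℝ) ≤ |ξ * h ξ ^ 2 - π * ((j:ℝ) - 1 / 2)| := abs_nonneg _
  have hm := mul_le_mul_of_nonneg_right hΔ
    (le_of_lt (mul_pos hjpos (by positivity : (0:ℝ) < lam ^ 2)))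
  have hcalc : (4:ℝ) / (j:ℝ) * ((j:ℝ) * lam ^ 2) = 4 * lam ^ 2 := by
    field_simp
  nlinarith [hm, hcalc, sq_nonneg lam]
end

section
/- Define h : ℝ → ℝ by h(ξ) = |cos ξ| + |sin ξ|. Fix λ > 0 and c ≥ 10λ. Then there exist C₁ > 0 and ε₀ > 0, depending only on λ and c, such that for all ε ∈ (0, ε₀), all τ > 0, and all pairs (a, b) with a ∈ [0, c], b ∈ [0, ε] and a · h(2τa²) ≥ λ + C₁·√τ·ε + √ε, the following hold: a + b ≤ 2c, and √( a²·cos²(2τ(a² + b²)) + b²·sin²(2τ(a² + b²)) ) + √( b²·cos²(2τ(a² + b²)) + a²·sin²(2τ(a² + b²)) ) ≥ λ. -/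
open Real

lemma sin_lip (x y : ℝ) : |Real.sin x - Real.sin y| ≤ |x - y| := by
  rw [Real.sin_sub_sin, abs_mul, abs_mul, abs_two]
  have h1 : |Real.sin ((x - y) / 2)| ≤ |(x - y) / 2| := Real.abs_sin_le_abs
  have h2 : |Real.cos ((x + y) / 2)| ≤ 1 := Real.abs_cos_le_one _
  have h3 : |(x - y) / 2| = |x - y| / 2 := by rw [abs_div]; norm_num
  nlinarith [abs_nonneg (Real.sin ((x - y) / 2)), abs_nonneg (Real.cos ((x + y) / 2)),
    abs_nonneg (x - y)]

lemma cos_lip (x y : ℝ) : |Real.cos x - Real.cos y| ≤ |x - y| := by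
  rw [Real.cos_sub_cos, abs_mul, abs_mul, show |(-2:ℝ)| = 2 by norm_num]
  have h1 : |Real.sin ((x - y) / 2)| ≤ |(x - y) / 2| := Real.abs_sin_le_abs
  have h2 : |Real.sin ((x + y) / 2)| ≤ 1 := Real.abs_sin_le_one _
  have h3 : |(x - y) / 2| = |x - y| / 2 := by rw [abs_div]; norm_num
  nlinarith [abs_nonneg (Real.sin ((x - y) / 2)), abs_nonneg (Real.sin ((x + y) / 2)),
    abs_nonneg (x - y)]

set_option maxHeartbeats 1000000 in
/-- Inclusion of the rectangle-type set `{a ∈ [0,c] : a h(2τa²) ≥ λ + C₁√τ ε + √ε} × [0, ε]`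
into the extreme-event set `A(τ, λ)`. -/
theorem rectangle_inclusion (lam c : ℝ) (hlam : 0 < lam) (hc : 10 * lam ≤ c) :
    ∃ C₁ > 0, ∃ ε₀ > 0, ∀ ε ∈ Set.Ioo (0 : ℝ) ε₀, ∀ τ : ℝ, 0 < τ →
      ∀ a b : ℝ, a ∈ Set.Icc 0 c → b ∈ Set.Icc 0 ε →
        lam + C₁ * Real.sqrt τ * ε + Real.sqrt ε ≤ a * h (2 * τ * a ^ 2) →
          a + b ≤ 2 * c ∧
          lam ≤ Real.sqrt (a ^ 2 * Real.cos (2 * τ * (a ^ 2 + b ^ 2)) ^ 2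
                  + b ^ 2 * Real.sin (2 * τ * (a ^ 2 + b ^ 2)) ^ 2)
              + Real.sqrt (b ^ 2 * Real.cos (2 * τ * (a ^ 2 + b ^ 2)) ^ 2
                  + a ^ 2 * Real.sin (2 * τ * (a ^ 2 + b ^ 2)) ^ 2) := by
  have hc0 : 0 < c := by linarith
  refine ⟨3 * c, by linarith, c, hc0, ?_⟩
  rintro ε ⟨hε0, hεc⟩ τ hτ a b ⟨ha0, hac⟩ ⟨hb0, hbε⟩ hmain
  have hτ0 : (0:ℝ) ≤ τ := hτ.le
  have hsτ : 0 < Real.sqrt τ := Real.sqrt_pos.mpr hτ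
  have hsq : Real.sqrt τ ^ 2 = τ := Real.sq_sqrt hτ0
  refine ⟨by linarith, ?_⟩
  set θ : ℝ := 2 * τ * (a ^ 2 + b ^ 2) with hθ
  -- the two square roots dominate a|cos θ| and a|sin θ|
  have key1 : a * |Real.cos θ| ≤
      Real.sqrt (a ^ 2 * Real.cos θ ^ 2 + b ^ 2 * Real.sin θ ^ 2) := by
    have e1 : Real.sqrt (a ^ 2 * Real.cos θ ^ 2) = a * |Real.cos θ| := by
      rw [show a ^ 2 * Real.cos θ ^ 2 = (a * Real.cos θ) ^ 2 by ring,
        Real.sqrt_sq_eq_abs, abs_mul, abs_of_nonneg ha0]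
    rw [← e1]
    apply Real.sqrt_le_sqrt
    nlinarith [sq_nonneg (b * Real.sin θ)]
  have key2 : a * |Real.sin θ| ≤
      Real.sqrt (b ^ 2 * Real.cos θ ^ 2 + a ^ 2 * Real.sin θ ^ 2) := by
    have e1 : Real.sqrt (a ^ 2 * Real.sin θ ^ 2) = a * |Real.sin θ| := by
      rw [show a ^ 2 * Real.sin θ ^ 2 = (a * Real.sin θ) ^ 2 by ring,
        Real.sqrt_sq_eq_abs, abs_mul, abs_of_nonneg ha0]
    rw [← e1]
    apply Real.sqrt_le_sqrt
    nlinarith [sq_nonneg (b * Real.cos θ)]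
  -- it suffices to show lam ≤ a * h θ
  have suff : lam ≤ a * (|Real.cos θ| + |Real.sin θ|) → lam ≤
      Real.sqrt (a ^ 2 * Real.cos θ ^ 2 + b ^ 2 * Real.sin θ ^ 2)
      + Real.sqrt (b ^ 2 * Real.cos θ ^ 2 + a ^ 2 * Real.sin θ ^ 2) := by
    intro hle
    nlinarith [key1, key2]
  apply suff
  -- Lipschitz bound: h θ ≥ h(2τa²) - 4τb²
  have hδ : θ - 2 * τ * a ^ 2 = 2 * τ * b ^ 2 := by rw [hθ]; ring
  have habsδ : |θ - 2 * τ * a ^ 2| = 2 * τ * b ^ 2 := by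
    rw [hδ, abs_of_nonneg (by positivity)]
  have tri1 : |Real.cos (2 * τ * a ^ 2)| - |Real.cos θ| ≤ 2 * τ * b ^ 2 := by
    calc |Real.cos (2 * τ * a ^ 2)| - |Real.cos θ| ≤
        |Real.cos (2 * τ * a ^ 2) - Real.cos θ| := abs_sub_abs_le_abs_sub _ _
      _ ≤ |2 * τ * a ^ 2 - θ| := cos_lip _ _
      _ = |θ - 2 * τ * a ^ 2| := abs_sub_comm _ _
      _ = 2 * τ * b ^ 2 := habsδ
  have tri2 : |Real.sin (2 * τ * a ^ 2)| - |Real.sin θ| ≤ 2 * τ * b ^ 2 := by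
    calc |Real.sin (2 * τ * a ^ 2)| - |Real.sin θ| ≤
        |Real.sin (2 * τ * a ^ 2) - Real.sin θ| := abs_sub_abs_le_abs_sub _ _
      _ ≤ |2 * τ * a ^ 2 - θ| := sin_lip _ _
      _ = |θ - 2 * τ * a ^ 2| := abs_sub_comm _ _
      _ = 2 * τ * b ^ 2 := habsδ
  have hmain' : lam + 3 * c * Real.sqrt τ * ε + Real.sqrt ε ≤
      a * (|Real.cos (2 * τ * a ^ 2)| + |Real.sin (2 * τ * a ^ 2)|) := hmain
  have hεs : 0 ≤ Real.sqrt ε := Real.sqrt_nonneg ε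
  by_cases hcase : Real.sqrt τ ≤ 3 / (4 * ε)
  · -- small τ: Lipschitz estimate suffices
    have h1 : Real.sqrt τ * ε ≤ 3 / 4 := by
      rw [le_div_iff₀ (by linarith : (0:ℝ) < 4 * ε)] at hcase
      nlinarith
    have hτbound : 4 * τ * c * ε ^ 2 ≤ 3 * c * Real.sqrt τ * ε := by
      have key := mul_le_mul_of_nonneg_left h1
        (show (0:ℝ) ≤ 4 * c * (Real.sqrt τ * ε) by positivity)
      calc 4 * τ * c * ε ^ 2 = 4 * c * (Real.sqrt τ * ε) * (Real.sqrt τ * ε) := by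
            linear_combination (-4 * c * ε ^ 2) * hsq
        _ ≤ 4 * c * (Real.sqrt τ * ε) * (3 / 4) := key
        _ = 3 * c * Real.sqrt τ * ε := by ring
    have hb2 : b ^ 2 ≤ ε ^ 2 := by nlinarith
    have hab1 : a * b ^ 2 ≤ c * b ^ 2 := mul_le_mul_of_nonneg_right hac (sq_nonneg b)
    have hab2 : c * b ^ 2 ≤ c * ε ^ 2 := mul_le_mul_of_nonneg_left hb2 hc0.le
    have hab3 : a * (2 * τ * b ^ 2 + 2 * τ * b ^ 2) ≤ 4 * τ * c * ε ^ 2 := by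
      have := mul_le_mul_of_nonneg_left (hab1.trans hab2) hτ0
      have e : τ * (a * b ^ 2) = a * (2 * τ * b ^ 2 + 2 * τ * b ^ 2) / 4 := by ring
      linarith [this, e]
    have hstep : |Real.cos (2 * τ * a ^ 2)| + |Real.sin (2 * τ * a ^ 2)|
        - (2 * τ * b ^ 2 + 2 * τ * b ^ 2) ≤ |Real.cos θ| + |Real.sin θ| := by
      linarith
    have hstep2 := mul_le_mul_of_nonneg_left hstep ha0
    have e : a * (|Real.cos (2 * τ * a ^ 2)| + |Real.sin (2 * τ * a ^ 2)|
        - (2 * τ * b ^ 2 + 2 * τ * b ^ 2))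
        = a * (|Real.cos (2 * τ * a ^ 2)| + |Real.sin (2 * τ * a ^ 2)|)
          - a * (2 * τ * b ^ 2 + 2 * τ * b ^ 2) := by ring
    linarith [hstep2, e, hab3, hτbound, hmain', hεs]
  · -- large τ: hypothesis is contradictory
    exfalso
    push_neg at hcase
    have h1 : 3 / 4 < Real.sqrt τ * ε := by
      rw [div_lt_iff₀ (by linarith : (0:ℝ) < 4 * ε)] at hcase
      nlinarith
    have hXY : |Real.cos (2 * τ * a ^ 2)| + |Real.sin (2 * τ * a ^ 2)| ≤ 2 := by
      linarith [Real.abs_cos_le_one (2 * τ * a ^ 2), Real.abs_sin_le_one (2 * τ * a ^ 2)]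
    have hh2 : a * (|Real.cos (2 * τ * a ^ 2)| + |Real.sin (2 * τ * a ^ 2)|) ≤ 2 * c := by
      have := mul_le_mul_of_nonneg_left hXY ha0
      linarith
    have h2 : 3 * c * (3 / 4) < 3 * c * (Real.sqrt τ * ε) :=
      mul_lt_mul_of_pos_left h1 (by linarith)
    linarith [h2, hh2, hmain', hεs]
end

section
/- Let A, B ∈ ℂ, and set J = |A|² + |B|² and K = A·conj(B) + B·conj(A). Define u₁, u₋₁ : ℝ → ℂ by u₁(t) = e^{−i(1+2K)t}·( A·cos(2Jt) − i·B·sin(2Jt) ) and u₋₁(t) = e^{−i(1+2K)t}·( B·cos(2Jt) − i·A·sin(2Jt) ). Then u₁(0) = A, u₋₁(0) = B, and for every t ∈ ℝ: u₁'(t) = −i·( (1 + 2·(u₁(t)·conj(u₋₁(t)) + u₋₁(t)·conj(u₁(t))))·u₁(t) + 2·(|u₁(t)|² + |u₋₁(t)|²)·u₋₁(t) ) and u₋₁'(t) = −i·( (1 + 2·(u₁(t)·conj(u₋₁(t)) + u₋₁(t)·conj(u₁(t))))·u₋₁(t) + 2·(|u₁(t)|² + |u₋₁(t)|²)·u₁(t)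 ). -/
/-!
The normal modes `u₁ ± u₋₁` of the explicit curve are pure phases, `(A ± B) e^{-i(1 + 2K ± 2J)t}`,
so their moduli are constant. Since `|u₁|² + |u₋₁|²` and `u₁ū₋₁ + u₋₁ū₁` are the half sum and half
difference of `|u₁ + u₋₁|²` and `|u₁ - u₋₁|²`, the quantities `J` and `K` are conserved along the curve.
With `J` and `K` frozen, the system becomes linear with constant coefficients, and the explicit curve
solves that linear system.
-/

open Complex ComplexConjugate

noncomputable def beatingMode (ω θ A B : ℂ) (t : ℝ) : ℂ :=
  exp (-I * ω * t) * (A * cos (θ * t) - I * B * sin (θ * t))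

section BeatingMode

variable (ω θ A B : ℂ)

@[simp]
theorem beatingMode_zero : beatingMode ω θ A B 0 = A := by
  simp [beatingMode]

theorem hasDerivAt_beatingMode (t : ℝ) :
    HasDerivAt (beatingMode ω θ A B)
      (-I * (ω * beatingMode ω θ A B t + θ * beatingMode ω θ B A t)) t := by
  have hlin (w : ℂ) : HasDerivAt (fun z : ℂ => w * z) w t := by
    simpa using (hasDerivAt_id (t : ℂ)).const_mul w
  have hexp := (hlin (-I * ω)).cexp.comp_ofReal
  have hcos := (hlin θ).ccos.comp_ofReal
  have hsin := (hlin θ).csin.comp_ofReal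
  refine (hexp.mul ((hcos.const_mul A).sub (hsin.const_mul (I * B)))).congr_deriv ?_
  simp only [beatingMode, Pi.sub_apply]
  linear_combination -exp (-I * ω * t) * A * θ * sin (θ * t) * I_sq

theorem beatingMode_add_swap (t : ℝ) :
    beatingMode ω θ A B t + beatingMode ω θ B A t = (A + B) * exp (-I * (ω + θ) * t) := by
  have h : exp (-I * θ * t) = cos (θ * t) - I * sin (θ * t) := by
    rw [show -I * θ * t = -(θ * t) * I by ring, exp_mul_I, cos_neg, sin_neg]; ring
  rw [show -I * (ω + θ) * t = -I * ω * t + -I * θ * t by ring, exp_add, h, beatingMode,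
    beatingMode]
  ring

theorem beatingMode_sub_swap (t : ℝ) :
    beatingMode ω θ A B t - beatingMode ω θ B A t = (A - B) * exp (-I * (ω - θ) * t) := by
  have h : exp (I * θ * t) = cos (θ * t) + I * sin (θ * t) := by
    rw [show I * θ * t = (θ * t) * I by ring, exp_mul_I]; ring
  rw [show -I * (ω - θ) * t = -I * ω * t + I * θ * t by ring, exp_add, h, beatingMode,
    beatingMode]
  ring

end BeatingMode

theorem norm_exp_neg_I_mul_of_conj_eq {α : ℂ} (hα : conj α = α) (t : ℝ) :
    ‖exp (-I * α * t)‖ = 1 := by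
  simp [norm_exp, conj_eq_iff_im.mp hα]

theorem mul_conj_add_mul_conj (x y : ℂ) :
    x * conj y + y * conj x = ((‖x + y‖ ^ 2 - ‖x - y‖ ^ 2 : ℝ) : ℂ) / 2 := by
  push_cast
  rw [← mul_conj', ← mul_conj']
  simp only [map_add, map_sub]
  ring

section Conservation

variable {ω θ : ℂ} (hω : conj ω = ω) (hθ : conj θ = θ) (A B : ℂ) (t : ℝ)
include hω hθ

theorem norm_beatingMode_add_swap :
    ‖beatingMode ω θ A B t + beatingMode ω θ B A t‖ = ‖A + B‖ := by
  have hωθ : conj (ω + θ) = ω + θ := by rw [map_add, hω, hθ]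
  rw [beatingMode_add_swap, norm_mul, norm_exp_neg_I_mul_of_conj_eq hωθ, mul_one]

theorem norm_beatingMode_sub_swap :
    ‖beatingMode ω θ A B t - beatingMode ω θ B A t‖ = ‖A - B‖ := by
  have hωθ : conj (ω - θ) = ω - θ := by rw [map_sub, hω, hθ]
  rw [beatingMode_sub_swap, norm_mul, norm_exp_neg_I_mul_of_conj_eq hωθ, mul_one]

theorem beatingMode_norm_sq_add_norm_sq :
    ‖beatingMode ω θ A B t‖ ^ 2 + ‖beatingMode ω θ B A t‖ ^ 2 = ‖A‖ ^ 2 + ‖B‖ ^ 2 := by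
  have h := parallelogram_law_with_norm ℝ (beatingMode ω θ A B t) (beatingMode ω θ B A t)
  rw [norm_beatingMode_add_swap hω hθ, norm_beatingMode_sub_swap hω hθ,
    parallelogram_law_with_norm ℝ A B] at h
  linarith

theorem beatingMode_mul_conj_add_mul_conj :
    beatingMode ω θ A B t * conj (beatingMode ω θ B A t)
      + beatingMode ω θ B A t * conj (beatingMode ω θ A B t) = A * conj B + B * conj A := by
  rw [mul_conj_add_mul_conj, mul_conj_add_mul_conj, norm_beatingMode_add_swap hω hθ,
    norm_beatingMode_sub_swap hω hθ]

end Conservation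

/-- The explicit beating-mode profiles solve the two-dimensional Hamiltonian system
`∂ₜu₁ = −i((1+2K)u₁ + 2J uneg)`, `∂ₜuneg = −i((1+2K)uneg + 2J u₁)` with
`J = |u₁|² + |uneg|²`, `K = u₁ū₋₁ + unegū₁`, and initial data `(A, B)`. -/
theorem explicit_solution_two_mode_system (A B : ℂ)
    (J K : ℂ)
    (hJ : J = (‖A‖ : ℂ) ^ 2 + (‖B‖ : ℂ) ^ 2)
    (hK : K = A * (starRingEnd ℂ) B + B * (starRingEnd ℂ) A)
    (u₁ uneg : ℝ → ℂ)
    (hu₁ : u₁ = fun t : ℝ => Complex.exp (-Complex.I * (1 + 2 * K) * (t : ℂ)) *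
      (A * Complex.cos (2 * J * (t : ℂ)) - Complex.I * B * Complex.sin (2 * J * (t : ℂ))))
    (huneg : uneg = fun t : ℝ => Complex.exp (-Complex.I * (1 + 2 * K) * (t : ℂ)) *
      (B * Complex.cos (2 * J * (t : ℂ)) - Complex.I * A * Complex.sin (2 * J * (t : ℂ)))) :
    u₁ 0 = A ∧ uneg 0 = B ∧ ∀ t : ℝ,
      HasDerivAt u₁
        (-Complex.I * ((1 + 2 * (u₁ t * (starRingEnd ℂ) (uneg t)
            + uneg t * (starRingEnd ℂ) (u₁ t))) * u₁ t
          + 2 * ((‖u₁ t‖ : ℂ) ^ 2 + (‖uneg t‖ : ℂ) ^ 2) * uneg t)) t ∧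
      HasDerivAt uneg
        (-Complex.I * ((1 + 2 * (u₁ t * (starRingEnd ℂ) (uneg t)
            + uneg t * (starRingEnd ℂ) (u₁ t))) * uneg t
          + 2 * ((‖u₁ t‖ : ℂ) ^ 2 + (‖uneg t‖ : ℂ) ^ 2) * u₁ t)) t := by
  have hω : conj (1 + 2 * K) = 1 + 2 * K := by
    rw [hK]; simp only [map_add, map_mul, map_one, map_ofNat, conj_conj]; ring
  have hθ : conj (2 * J) = 2 * J := by
    rw [hJ]; simp only [map_mul, map_add, map_pow, map_ofNat, conj_ofReal]
  obtain rfl : u₁ = beatingMode (1 + 2 * K) (2 * J) A B := hu₁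
  obtain rfl : uneg = beatingMode (1 + 2 * K) (2 * J) B A := huneg
  refine ⟨beatingMode_zero .., beatingMode_zero .., fun t => ?_⟩
  have hJt : (‖beatingMode (1 + 2 * K) (2 * J) A B t‖ : ℂ) ^ 2
      + (‖beatingMode (1 + 2 * K) (2 * J) B A t‖ : ℂ) ^ 2 = (‖A‖ : ℂ) ^ 2 + (‖B‖ : ℂ) ^ 2 := by
    exact_mod_cast beatingMode_norm_sq_add_norm_sq hω hθ A B t
  rw [hJt, ← hJ, beatingMode_mul_conj_add_mul_conj hω hθ, ← hK]
  exact ⟨hasDerivAt_beatingMode .., hasDerivAt_beatingMode ..⟩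
end

section
/- Let I ⊆ ℝ be an interval and let u₁, u₋₁ : I → ℂ be differentiable functions satisfying, for all t ∈ I, u₁'(t) = −i·( (1 + 2·(u₁(t)·conj(u₋₁(t)) + u₋₁(t)·conj(u₁(t))))·u₁(t) + 2·(|u₁(t)|² + |u₋₁(t)|²)·u₋₁(t) ) and u₋₁'(t) = −i·( (1 + 2·(u₁(t)·conj(u₋₁(t)) + u₋₁(t)·conj(u₁(t))))·u₋₁(t) + 2·(|u₁(t)|² + |u₋₁(t)|²)·u₁(t) ). Then the functions t ↦ |u₁(t)|² + |u₋₁(t)|² and t ↦ u₁(t)·conj(u₋₁(t)) + u₋₁(t)·conj(u₁(t)) are constant on I. -/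
/-!
Along a solution the system reads `u' = -i H(t) u` with the real symmetric matrix
`H = [[1 + 2K, 2J], [2J, 1 + 2K]]`, where `J = |u₁|² + |u₋₁|²` and `K = 2 Re (u₁ ū₋₁)`.
Since `H` is Hermitian the flow conserves `|u|² = J`, and since `H` commutes with the swap
`σ = [[0, 1], [1, 0]]` it also conserves `⟨u, σ u⟩ = K`. Both facts hold for any real
`α(t), β(t)` in place of `1 + 2K, 2J`, so no nonlinearity enters the argument.
-/

open Complex ComplexConjugate

theorem Set.OrdConnected.eq_of_hasDerivWithinAt_eq_zero {E : Type*} [NormedAddCommGroup E]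
    [NormedSpace ℝ E] {I : Set ℝ} (hI : I.OrdConnected) {f : ℝ → E}
    (hf : ∀ t ∈ I, HasDerivWithinAt f 0 I t) {s t : ℝ} (hs : s ∈ I) (ht : t ∈ I) :
    f s = f t := by
  have h := hI.convex.norm_image_sub_le_of_norm_hasDerivWithin_le (C := 0) hf
    (fun _ _ => by simp) hs ht
  rw [zero_mul, norm_le_zero_iff, sub_eq_zero] at h
  exact h.symm

theorem HasDerivWithinAt.mul_conj {f g : ℝ → ℂ} {f' g' : ℂ} {I : Set ℝ} {t : ℝ}
    (hf : HasDerivWithinAt f f' I t) (hg : HasDerivWithinAt g g' I t) :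
    HasDerivWithinAt (fun s => f s * conj (g s)) (f' * conj (g t) + f t * conj g') I t :=
  hf.mul hg.star

section TwoModeLinear

/-- First component of `-i H (a, b)` for `H = [[α, β], [β, α]]`; the second one is
`twoModeVelocity α β b a`. -/
def twoModeVelocity (α β : ℝ) (a b : ℂ) : ℂ := -I * (α * a + β * b)

theorem twoModeVelocity_mass_eq_zero (α β : ℝ) (a b : ℂ) :
    twoModeVelocity α β a b * conj a + a * conj (twoModeVelocity α β a b)
      + (twoModeVelocity α β b a * conj b + b * conj (twoModeVelocity α β b a)) = 0 := by
  simp only [twoModeVelocity, map_mul, map_add, map_neg, conj_I, conj_ofReal]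
  ring

theorem twoModeVelocity_coupling_eq_zero (α β : ℝ) (a b : ℂ) :
    twoModeVelocity α β a b * conj b + a * conj (twoModeVelocity α β b a)
      + (twoModeVelocity α β b a * conj a + b * conj (twoModeVelocity α β a b)) = 0 := by
  simp only [twoModeVelocity, map_mul, map_add, map_neg, conj_I, conj_ofReal]
  ring

variable {I : Set ℝ} {u v : ℝ → ℂ} {α β : ℝ → ℝ}

theorem mass_conserved_of_twoModeVelocity (hI : I.OrdConnected)
    (hu : ∀ t ∈ I, HasDerivWithinAt u (twoModeVelocity (α t) (β t) (u t) (v t)) I t)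
    (hv : ∀ t ∈ I, HasDerivWithinAt v (twoModeVelocity (α t) (β t) (v t) (u t)) I t)
    {s t : ℝ} (hs : s ∈ I) (ht : t ∈ I) :
    ‖u s‖ ^ 2 + ‖v s‖ ^ 2 = ‖u t‖ ^ 2 + ‖v t‖ ^ 2 := by
  have h : u s * conj (u s) + v s * conj (v s) = u t * conj (u t) + v t * conj (v t) := by
    refine hI.eq_of_hasDerivWithinAt_eq_zero (f := fun r => u r * conj (u r) + v r * conj (v r))
      (fun r hr => ?_) hs ht
    simpa only [twoModeVelocity_mass_eq_zero] using
      ((hu r hr).mul_conj (hu r hr)).fun_add ((hv r hr).mul_conj (hv r hr))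
  simp only [RCLike.mul_conj] at h
  exact_mod_cast h

theorem coupling_conserved_of_twoModeVelocity (hI : I.OrdConnected)
    (hu : ∀ t ∈ I, HasDerivWithinAt u (twoModeVelocity (α t) (β t) (u t) (v t)) I t)
    (hv : ∀ t ∈ I, HasDerivWithinAt v (twoModeVelocity (α t) (β t) (v t) (u t)) I t)
    {s t : ℝ} (hs : s ∈ I) (ht : t ∈ I) :
    u s * conj (v s) + v s * conj (u s) = u t * conj (v t) + v t * conj (u t) := by
  refine hI.eq_of_hasDerivWithinAt_eq_zero (f := fun r => u r * conj (v r) + v r * conj (u r))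
    (fun r hr => ?_) hs ht
  simpa only [twoModeVelocity_coupling_eq_zero] using
    ((hu r hr).mul_conj (hv r hr)).fun_add ((hv r hr).mul_conj (hu r hr))

end TwoModeLinear

theorem mul_conj_add_mul_conj_eq_ofReal (a b : ℂ) :
    a * conj b + b * conj a = ((2 * (a * conj b).re : ℝ) : ℂ) := by
  rw [← add_conj, map_mul, conj_conj, mul_comm (conj a)]

/-- Conservation of the mass `J₁ = |u₁|² + |uneg|²` and of `K₁ = u₁ū₋₁ + unegū₁`
along solutions of the two-dimensional Hamiltonian system on an interval `I`. -/
theorem conserved_quantities_two_mode_system (I : Set ℝ) (hI : Set.OrdConnected I)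
    (u₁ uneg : ℝ → ℂ)
    (h₁ : ∀ t ∈ I, HasDerivWithinAt u₁
      (-Complex.I * ((1 + 2 * (u₁ t * (starRingEnd ℂ) (uneg t)
          + uneg t * (starRingEnd ℂ) (u₁ t))) * u₁ t
        + 2 * ((‖u₁ t‖ : ℂ) ^ 2 + (‖uneg t‖ : ℂ) ^ 2) * uneg t)) I t)
    (h₂ : ∀ t ∈ I, HasDerivWithinAt uneg
      (-Complex.I * ((1 + 2 * (u₁ t * (starRingEnd ℂ) (uneg t)
          + uneg t * (starRingEnd ℂ) (u₁ t))) * uneg t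
        + 2 * ((‖u₁ t‖ : ℂ) ^ 2 + (‖uneg t‖ : ℂ) ^ 2) * u₁ t)) I t) :
    (∀ s ∈ I, ∀ t ∈ I,
      ‖u₁ s‖ ^ 2 + ‖uneg s‖ ^ 2
        = ‖u₁ t‖ ^ 2 + ‖uneg t‖ ^ 2) ∧
    (∀ s ∈ I, ∀ t ∈ I,
      u₁ s * (starRingEnd ℂ) (uneg s) + uneg s * (starRingEnd ℂ) (u₁ s)
        = u₁ t * (starRingEnd ℂ) (uneg t) + uneg t * (starRingEnd ℂ) (u₁ t)) := by
  set α : ℝ → ℝ := fun t => 1 + 2 * (2 * (u₁ t * conj (uneg t)).re)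
  set β : ℝ → ℝ := fun t => 2 * (‖u₁ t‖ ^ 2 + ‖uneg t‖ ^ 2)
  have hu₁ : ∀ t ∈ I, HasDerivWithinAt u₁ (twoModeVelocity (α t) (β t) (u₁ t) (uneg t)) I t :=
    fun t ht => by
      convert h₁ t ht using 1
      simp only [twoModeVelocity, α, β, mul_conj_add_mul_conj_eq_ofReal]
      push_cast
      ring
  have huneg : ∀ t ∈ I, HasDerivWithinAt uneg (twoModeVelocity (α t) (β t) (uneg t) (u₁ t)) I t :=
    fun t ht => by
      convert h₂ t ht using 1
      simp only [twoModeVelocity, α, β, mul_conj_add_mul_conj_eq_ofReal]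
      push_cast
      ring
  exact ⟨fun s hs t ht => mass_conserved_of_twoModeVelocity hI hu₁ huneg hs ht,
    fun s hs t ht => coupling_conserved_of_twoModeVelocity hI hu₁ huneg hs ht⟩
end
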